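/- arXiv:2310.11841 — 8 statements merged into one kernel-verified Lean document; each statement's English description precedes it below -/
import Mathlib

section
/- For m > ρ ≥ 2, every classification aggregation function that is citizen sovereign and independent is essentially a dictatorship, i.e., there exist an individual d ∈ N and a permutation π of P such that α(c) = π ∘ c_d for every profile c. -/
/-- A classification: a surjective mapping from objects `X` to categories `P`. -/
abbrev Classif (X P : Type) : Type := {c : X → P // Function.Surjective c}

/-- A profile of classifications, one per individual in `Fin n`. -/
abbrev Profile (n : ℕ) (X P : Type) : Type := Fin n → Classif X P

/-- A CAF is independent if the aggregate category of an object only depends on the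
categories the individuals put that object in. -/
def Independent {n : ℕ} {X P : Type} (α : Profile n X P → Classif X P) : Prop :=
  ∀ (x : X) (c c' : Profile n X P),
    (∀ i, (c i).1 x = (c' i).1 x) → (α c).1 x = (α c').1 x

/-- A CAF is citizen sovereign if any object can be classified in any category. -/
def CitizenSovereign {n : ℕ} {X P : Type} (α : Profile n X P → Classif X P) : Prop :=
  ∀ (x : X) (p : P), ∃ c : Profile n X P, (α c).1 x = p

/-- A CAF is unanimous if it maps every constant profile `(c, …, c)` to `c`. -/
def Unanimous {n : ℕ} {X P : Type} (α : Profile n X P → Classif X P) : Prop :=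
  ∀ c : Classif X P, (α (fun _ => c)).1 = c.1

/-- A CAF satisfies generalized unanimity if there is a permutation `π` of `P` with
`α(c, …, c) = π ∘ c` for every classification `c`. -/
def GeneralizedUnanimity {n : ℕ} {X P : Type} (α : Profile n X P → Classif X P) : Prop :=
  ∃ π : Equiv.Perm P, ∀ c : Classif X P, (α (fun _ => c)).1 = π ∘ c.1

/-- A CAF is essentially a dictatorship if there are an individual `d` and a permutation
`π` of `P` such that `α(c) = π ∘ c_d` for every profile `c`. -/
def EssentiallyDictatorship {n : ℕ} {X P : Type} (α : Profile n X P → Classif X P) : Prop :=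
  ∃ (d : Fin n) (π : Equiv.Perm P), ∀ c : Profile n X P, (α c).1 = π ∘ (c d).1

/-- A CAF is a dictatorship if there is an individual `d` such that `α(c) = c_d`
for every profile `c`. -/
def Dictatorship {n : ℕ} {X P : Type} (α : Profile n X P → Classif X P) : Prop :=
  ∃ d : Fin n, ∀ c : Profile n X P, (α c).1 = (c d).1



namespace CAFProof

variable {X P : Type} [Fintype X] [Fintype P] [DecidableEq X] [DecidableEq P]

lemma exists_fill (s : Finset X) (T : Finset P) (u₀ : P) (h : T.card ≤ s.card) :
    ∃ e : X → P, (∀ y ∈ s, e y ∈ insert u₀ T) ∧ ∀ t ∈ T, ∃ y ∈ s, e y = t := by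
  classical
  have hc : Fintype.card {t : P // t ∈ T} ≤ Fintype.card {y : X // y ∈ s} := by
    simpa [Fintype.card_coe] using h
  obtain ⟨j⟩ : Nonempty ({t : P // t ∈ T} ↪ {y : X // y ∈ s}) :=
    Function.Embedding.nonempty_of_card_le hc
  refine ⟨fun y => if h : ∃ t : {t : P // t ∈ T}, (j t : X) = y then h.choose.1 else u₀,
    ?_, ?_⟩
  · intro y _
    by_cases hh : ∃ t : {t : P // t ∈ T}, (j t : X) = y
    · simp only [dif_pos hh]
      exact Finset.mem_insert_of_mem hh.choose.2
    · simp only [dif_neg hh]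
      exact Finset.mem_insert_self _ _
  · intro t ht
    refine ⟨(j ⟨t, ht⟩ : X), (j ⟨t, ht⟩).2, ?_⟩
    have hh : ∃ t' : {t : P // t ∈ T}, (j t' : X) = (j ⟨t, ht⟩ : X) := ⟨⟨t, ht⟩, rfl⟩
    simp only [dif_pos hh]
    have h2 : hh.choose = ⟨t, ht⟩ := j.injective (Subtype.coe_injective hh.choose_spec)
    rw [h2]

lemma exists_notMem (A : Finset X) (h : A.card < Fintype.card X) : ∃ z, z ∉ A := by
  by_contra hc
  push_neg at hc
  have hsub : (Finset.univ : Finset X) ⊆ A := fun z _ => hc z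
  have := Finset.card_le_card hsub
  rw [Finset.card_univ] at this
  omega

variable {n : ℕ} {f : X → (Fin n → P) → P}

lemma ML (hsurj : ∀ x, Function.Surjective (f x))
    (hC : ∀ M : X → Fin n → P, (∀ i, Function.Surjective fun x => M x i) →
      Function.Surjective fun x => f x (M x))
    (hρ : 2 ≤ Fintype.card P)
    (p : P) (W : Finset X) (val : X → P)
    (hval : ∀ v, ∃ y, y ∉ W ∧ val y = v) :
    ∃ y, y ∉ W ∧ f y (fun _ => val y) = p := by
  classical
  have hw : ∀ y : X, ∃ q : Fin n → P, f y q ≠ p := by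
    intro y
    obtain ⟨p', hp'⟩ := Fintype.exists_ne_of_one_lt_card (by omega) p
    obtain ⟨q, hq⟩ := hsurj y p'
    exact ⟨q, by rw [hq]; exact hp'⟩
  choose t ht using hw
  set M : X → Fin n → P := fun y => if y ∈ W then t y else (fun _ => val y) with hM
  have hrows : ∀ i, Function.Surjective fun x => M x i := by
    intro i v
    obtain ⟨y, hyW, hyv⟩ := hval v
    exact ⟨y, by simp [hM, hyW, hyv]⟩
  obtain ⟨y, hy⟩ := hC M hrows p
  by_cases hyW : y ∈ W
  · exact absurd (by simpa [hM, hyW] using hy) (ht y)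
  · exact ⟨y, hyW, by simpa [hM, hyW] using hy⟩

lemma step1 (hsurj : ∀ x, Function.Surjective (f x))
    (hC : ∀ M : X → Fin n → P, (∀ i, Function.Surjective fun x => M x i) →
      Function.Surjective fun x => f x (M x))
    (hρ : 2 ≤ Fintype.card P) (hm : Fintype.card P < Fintype.card X) :
    ∃ vm : P → P, Function.Injective vm ∧ ∀ (y : X) (p : P), f y (fun _ => vm p) = p := by
  classical
  have hHall : ∀ p : P, ∃ T : Finset P,
      ((T.biUnion fun v => Finset.univ.filter fun y => f y (fun _ => v) ≠ p).card < T.card) := by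
    intro p
    by_contra hcon
    push_neg at hcon
    obtain ⟨sdr, hinj, hmem⟩ :=
      (Finset.all_card_le_biUnion_card_iff_existsInjective'
        (fun v => Finset.univ.filter fun y => f y (fun _ => v) ≠ p)).mp hcon
    set W : Finset X := Finset.univ.filter (fun y => ∀ v, sdr v ≠ y) with hW
    set val : X → P := fun y => if h : ∃ v', sdr v' = y then h.choose else p with hvaldef
    have hval : ∀ v, ∃ y, y ∉ W ∧ val y = v := by
      intro v
      refine ⟨sdr v, ?_, ?_⟩
      · intro hyW
        exact (Finset.mem_filter.mp hyW).2 v rfl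
      · have hh : ∃ v', sdr v' = sdr v := ⟨v, rfl⟩
        simp only [hvaldef, dif_pos hh]
        exact hinj hh.choose_spec
    obtain ⟨y, hyW, hyp⟩ := ML hsurj hC hρ p W val hval
    have hex : ∃ v, sdr v = y := by
      by_contra hno
      push_neg at hno
      exact hyW (Finset.mem_filter.mpr ⟨Finset.mem_univ _, hno⟩)
    obtain ⟨v, hv⟩ := hex
    have hval_y : val y = v := by
      have hh : ∃ v', sdr v' = y := ⟨v, hv⟩
      simp only [hvaldef, dif_pos hh]
      exact hinj (hh.choose_spec.trans hv.symm)
    rw [hval_y] at hyp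
    have hmv := hmem v
    simp only [Finset.mem_filter] at hmv
    exact hmv.2 (by rw [hv]; exact hyp)
  choose T hT using hHall
  set U : P → Finset X := fun p =>
    (T p).biUnion (fun v => Finset.univ.filter fun y => f y (fun _ => v) ≠ p) with hU
  set G : P → Finset X := fun p => Finset.univ \ U p with hG
  have hT' : ∀ p, (U p).card < (T p).card := by
    intro p
    simp only [hU]
    exact hT p
  have hkey : ∀ p, ∀ y ∈ G p, ∀ v ∈ T p, f y (fun _ => v) = p := by
    intro p y hy v hv
    by_contra hne
    have hyU : y ∈ U p :=
      Finset.mem_biUnion.mpr ⟨v, hv, Finset.mem_filter.mpr ⟨Finset.mem_univ _, hne⟩⟩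
    exact (Finset.mem_sdiff.mp hy).2 hyU
  have hTpos : ∀ p, 1 ≤ (T p).card := fun p => by have := hT' p; omega
  have hTle : ∀ p, (T p).card ≤ Fintype.card P :=
    fun p => (Finset.card_le_univ _).trans_eq Finset.card_univ
  have hGc : ∀ p, Fintype.card X + 1 ≤ (T p).card + (G p).card := by
    intro p
    have h1 : (G p).card = Fintype.card X - (U p).card := by
      rw [hG]
      rw [Finset.card_sdiff_of_subset (Finset.subset_univ _), Finset.card_univ]
    have h2 : (U p).card < (T p).card := hT' p
    have h3 : (U p).card ≤ Fintype.card X :=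
      (Finset.card_le_univ _).trans_eq Finset.card_univ
    omega
  have hlow : ∀ p, Fintype.card X ≤ (T p).card * (G p).card ∧
      (2 ≤ (T p).card → Fintype.card X + 1 ≤ (T p).card * (G p).card) := by
    intro p
    have h1 := hGc p
    have h2 := hTpos p
    have h3 := hTle p
    have hg2 : 2 ≤ (G p).card := by omega
    obtain ⟨u, hu⟩ := Nat.exists_eq_add_of_le h2
    have hmul : u * 2 ≤ u * (G p).card := Nat.mul_le_mul_left u hg2
    have hexp : (T p).card * (G p).card = (G p).card + u * (G p).card := by
      rw [hu]; ring
    constructor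
    · rw [hexp]
      have hge : Fintype.card X ≤ u + (G p).card := by omega
      nlinarith [hmul]
    · intro h4
      have hu1 : 1 ≤ u := by omega
      rw [hexp]
      have hge : Fintype.card X ≤ u + (G p).card := by omega
      nlinarith [hmul]
  have hyb : ∀ y : X, ∑ p : P, (if y ∈ G p then (T p).card else 0) ≤ Fintype.card P := by
    intro y
    have hdisj : ∀ p ∈ Finset.univ.filter (fun p : P => y ∈ G p),
        ∀ p' ∈ Finset.univ.filter (fun p : P => y ∈ G p), p ≠ p' →
        Disjoint (T p) (T p') := by
      intro p hp p' hp' hne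
      rw [Finset.disjoint_left]
      intro v hv hv'
      have h1 := hkey p y (Finset.mem_filter.mp hp).2 v hv
      have h2 := hkey p' y (Finset.mem_filter.mp hp').2 v hv'
      exact hne (h1.symm.trans h2)
    calc ∑ p : P, (if y ∈ G p then (T p).card else 0)
        = ∑ p ∈ Finset.univ.filter (fun p : P => y ∈ G p), (T p).card :=
          (Finset.sum_filter _ _).symm
      _ = ((Finset.univ.filter (fun p : P => y ∈ G p)).biUnion T).card :=
          (Finset.card_biUnion hdisj).symm
      _ ≤ Fintype.card P := (Finset.card_le_univ _).trans_eq Finset.card_univ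
  have hsum : ∑ p : P, (T p).card * (G p).card ≤ Fintype.card X * Fintype.card P := by
    calc ∑ p : P, (T p).card * (G p).card
        = ∑ p : P, ∑ y : X, (if y ∈ G p then (T p).card else 0) := by
          refine Finset.sum_congr rfl fun p _ => ?_
          rw [← Finset.sum_filter, Finset.sum_const, Finset.filter_univ_mem, smul_eq_mul,
            mul_comm]
      _ = ∑ y : X, ∑ p : P, (if y ∈ G p then (T p).card else 0) := Finset.sum_comm
      _ ≤ ∑ _y : X, Fintype.card P := Finset.sum_le_sum fun y _ => hyb y
      _ = Fintype.card X * Fintype.card P := by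
          rw [Finset.sum_const, Finset.card_univ, smul_eq_mul]
  have hT1 : ∀ p, (T p).card = 1 := by
    by_contra hcon
    push_neg at hcon
    obtain ⟨p₀, hp₀⟩ := hcon
    have h2 : 2 ≤ (T p₀).card := by have := hTpos p₀; omega
    have hstrict := (hlow p₀).2 h2
    have hlt : ∑ _p : P, Fintype.card X < ∑ p : P, (T p).card * (G p).card :=
      Finset.sum_lt_sum (fun p _ => (hlow p).1) ⟨p₀, Finset.mem_univ _, by omega⟩
    rw [Finset.sum_const, Finset.card_univ, smul_eq_mul] at hlt
    have := hlt.trans_le hsum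
    rw [mul_comm] at this
    exact lt_irrefl _ this
  have hv : ∀ p, ∃ v, T p = {v} := fun p => Finset.card_eq_one.mp (hT1 p)
  choose vm hvm using hv
  have hU0 : ∀ p, U p = ∅ := by
    intro p
    have h1 := hT' p
    rw [hT1 p] at h1
    exact Finset.card_eq_zero.mp (by omega)
  have hkey2 : ∀ (y : X) (p : P), f y (fun _ => vm p) = p := by
    intro y p
    refine hkey p y ?_ (vm p) (by rw [hvm p]; exact Finset.mem_singleton_self _)
    rw [hG]
    refine Finset.mem_sdiff.mpr ⟨Finset.mem_univ _, ?_⟩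
    rw [hU0]
    exact Finset.notMem_empty _
  haveI : Nonempty X := Fintype.card_pos_iff.mp (by omega)
  refine ⟨vm, ?_, hkey2⟩
  intro p p' hpp'
  have y₀ : X := Classical.arbitrary X
  have h1 := hkey2 y₀ p
  rw [hpp'] at h1
  exact h1.symm.trans (hkey2 y₀ p')


/-- pattern tuple: `u` on `S`, `u'` elsewhere -/
def qS (S : Finset (Fin n)) (u u' : P) : Fin n → P := fun i => if i ∈ S then u else u'

lemma B0 (hC : ∀ M : X → Fin n → P, (∀ i, Function.Surjective fun x => M x i) →
      Function.Surjective fun x => f x (M x))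
    (hunan : ∀ (x : X) (v : P), f x (fun _ => v) = v)
    (hρ : 2 ≤ Fintype.card P) (hm : Fintype.card P < Fintype.card X)
    {z z' : X} (hzz : z ≠ z') (a b : Fin n → P) (v : P)
    (hv : ∀ i, v = a i ∨ v = b i) : v = f z a ∨ v = f z' b := by
  classical
  obtain ⟨u₁, hu₁⟩ := Fintype.exists_ne_of_one_lt_card (by omega) v
  have hcard : (Finset.univ \ {v} : Finset P).card ≤
      (Finset.univ \ ({z, z'} : Finset X)).card := by
    rw [Finset.card_sdiff_of_subset (Finset.subset_univ _), Finset.card_sdiff_of_subset (Finset.subset_univ _),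
      Finset.card_singleton, Finset.card_pair hzz, Finset.card_univ, Finset.card_univ]
    omega
  obtain ⟨e, he1, he2⟩ :=
    exists_fill (Finset.univ \ ({z, z'} : Finset X)) (Finset.univ \ {v}) u₁ hcard
  set M : X → Fin n → P := fun y => if y = z then a else if y = z' then b else fun _ => e y
    with hM
  have hrows : ∀ i, Function.Surjective fun x => M x i := by
    intro i w
    by_cases hw : w = v
    · subst hw
      rcases hv i with h | h
      · exact ⟨z, by simp [hM, h.symm]⟩
      · refine ⟨z', ?_⟩
        simp only [hM, if_neg (Ne.symm hzz), if_pos rfl]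
        exact h.symm
    · obtain ⟨y, hy, hye⟩ := he2 w (by simp [hw])
      have hyz : y ≠ z := by
        intro hcon; rw [hcon] at hy
        simp at hy
      have hyz' : y ≠ z' := by
        intro hcon; rw [hcon] at hy
        simp at hy
      exact ⟨y, by simp [hM, hyz, hyz', hye]⟩
  obtain ⟨y, hy⟩ := hC M hrows v
  simp only at hy
  by_cases h1 : y = z
  · subst h1
    left
    simp only [hM, if_pos rfl] at hy
    exact hy.symm
  by_cases h2 : y = z'
  · subst h2
    right
    simp only [hM, if_neg h1, if_pos rfl] at hy
    exact hy.symm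
  · exfalso
    have hys : y ∈ Finset.univ \ ({z, z'} : Finset X) := by simp [h1, h2]
    have hmem := he1 y hys
    have hev : e y ≠ v := by
      rcases Finset.mem_insert.mp hmem with h | h
      · rw [h]; exact hu₁
      · simpa using (Finset.mem_sdiff.mp h).2
    have heq : f y (M y) = e y := by
      simp only [hM, if_neg h1, if_neg h2]
      exact hunan y (e y)
    exact hev (heq.symm.trans hy)

lemma B03 (hC : ∀ M : X → Fin n → P, (∀ i, Function.Surjective fun x => M x i) →
      Function.Surjective fun x => f x (M x))
    (hunan : ∀ (x : X) (v : P), f x (fun _ => v) = v)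
    (hρ : 2 ≤ Fintype.card P) (hm : Fintype.card P < Fintype.card X)
    {z₁ z₂ z₃ : X} (h12 : z₁ ≠ z₂) (h13 : z₁ ≠ z₃) (h23 : z₂ ≠ z₃)
    (a b c : Fin n → P) (u u' : P) (huu' : u ≠ u')
    (hu : ∀ i, u = a i ∨ u = b i ∨ u = c i)
    (hu' : ∀ i, u' = a i ∨ u' = b i ∨ u' = c i) :
    u' = f z₁ a ∨ u' = f z₂ b ∨ u' = f z₃ c := by
  classical
  have hc3 : ({z₁, z₂, z₃} : Finset X).card = 3 := by
    rw [Finset.card_insert_of_notMem (by simp [h12, h13]), Finset.card_pair h23]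
  have hc2 : (Finset.univ \ ({u, u'} : Finset P)).card = Fintype.card P - 2 := by
    rw [Finset.card_sdiff_of_subset (Finset.subset_univ _), Finset.card_pair huu', Finset.card_univ]
  have hcard : (Finset.univ \ ({u, u'} : Finset P)).card ≤
      (Finset.univ \ ({z₁, z₂, z₃} : Finset X)).card := by
    rw [hc2, Finset.card_sdiff_of_subset (Finset.subset_univ _), hc3, Finset.card_univ]
    omega
  obtain ⟨e, he1, he2⟩ :=
    exists_fill (Finset.univ \ ({z₁, z₂, z₃} : Finset X)) (Finset.univ \ ({u, u'} : Finset P))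
      u hcard
  set M : X → Fin n → P := fun y =>
    if y = z₁ then a else if y = z₂ then b else if y = z₃ then c else fun _ => e y with hM
  have hrows : ∀ i, Function.Surjective fun x => M x i := by
    intro i w
    by_cases hwu : w = u
    · subst hwu
      rcases hu i with h | h | h
      · exact ⟨z₁, by simp [hM, h.symm]⟩
      · refine ⟨z₂, ?_⟩
        simp only [hM, if_neg (Ne.symm h12), if_pos rfl]
        exact h.symm
      · refine ⟨z₃, ?_⟩
        simp only [hM, if_neg (Ne.symm h13), if_neg (Ne.symm h23), if_pos rfl]
        exact h.symm
    by_cases hwu' : w = u'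
    · subst hwu'
      rcases hu' i with h | h | h
      · exact ⟨z₁, by simp [hM, h.symm]⟩
      · refine ⟨z₂, ?_⟩
        simp only [hM, if_neg (Ne.symm h12), if_pos rfl]
        exact h.symm
      · refine ⟨z₃, ?_⟩
        simp only [hM, if_neg (Ne.symm h13), if_neg (Ne.symm h23), if_pos rfl]
        exact h.symm
    · obtain ⟨y, hy, hye⟩ := he2 w (by simp [hwu, hwu'])
      have hy1 : y ≠ z₁ := by intro hcon; rw [hcon] at hy; simp at hy
      have hy2 : y ≠ z₂ := by intro hcon; rw [hcon] at hy; simp at hy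
      have hy3 : y ≠ z₃ := by intro hcon; rw [hcon] at hy; simp at hy
      exact ⟨y, by simp [hM, hy1, hy2, hy3, hye]⟩
  obtain ⟨y, hy⟩ := hC M hrows u'
  simp only at hy
  by_cases h1 : y = z₁
  · subst h1
    left
    simp only [hM, if_pos rfl] at hy
    exact hy.symm
  by_cases h2 : y = z₂
  · subst h2
    right; left
    simp only [hM, if_neg h1, if_pos rfl] at hy
    exact hy.symm
  by_cases h3 : y = z₃
  · subst h3
    right; right
    simp only [hM, if_neg h1, if_neg h2, if_pos rfl] at hy
    exact hy.symm
  · exfalso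
    have hys : y ∈ Finset.univ \ ({z₁, z₂, z₃} : Finset X) := by simp [h1, h2, h3]
    have hmem := he1 y hys
    have hev : e y ≠ u' := by
      rcases Finset.mem_insert.mp hmem with h | h
      · rw [h]; exact huu'
      · intro hc
        have := (Finset.mem_sdiff.mp h).2
        simp [hc] at this
    have heq : f y (M y) = e y := by
      simp only [hM, if_neg h1, if_neg h2, if_neg h3]
      exact hunan y (e y)
    exact hev (heq.symm.trans hy)

lemma pairDict (hC : ∀ M : X → Fin n → P, (∀ i, Function.Surjective fun x => M x i) →
      Function.Surjective fun x => f x (M x))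
    (hunan : ∀ (x : X) (v : P), f x (fun _ => v) = v)
    (hρ : 2 ≤ Fintype.card P) (hm : Fintype.card P < Fintype.card X)
    {u u' : P} (huu' : u ≠ u') :
    ∃ d : Fin n, ∀ (z : X) (S : Finset (Fin n)),
      f z (qS S u u') = if d ∈ S then u else u' := by
  classical
  haveI : Nonempty X := Fintype.card_pos_iff.mp (by omega)
  have x₀ : X := Classical.arbitrary X
  -- complementarity
  have hcompl : ∀ (z z' : X), z ≠ z' → ∀ S : Finset (Fin n),
      (f z (qS S u u') = u ∧ f z' (qS Sᶜ u u') = u') ∨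
      (f z (qS S u u') = u' ∧ f z' (qS Sᶜ u u') = u) := by
    intro z z' hzz S
    have h1 : u = f z (qS S u u') ∨ u = f z' (qS Sᶜ u u') := by
      refine B0 hC hunan hρ hm hzz _ _ u (fun i => ?_)
      by_cases hi : i ∈ S
      · left; simp [qS, hi]
      · right; simp [qS, hi]
    have h2 : u' = f z (qS S u u') ∨ u' = f z' (qS Sᶜ u u') := by
      refine B0 hC hunan hρ hm hzz _ _ u' (fun i => ?_)
      by_cases hi : i ∈ S
      · right; simp [qS, hi]
      · left; simp [qS, hi]
    rcases h1 with h1 | h1 <;> rcases h2 with h2 | h2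
    · exact absurd (h1.trans h2.symm) huu'
    · exact Or.inl ⟨h1.symm, h2.symm⟩
    · exact Or.inr ⟨h2.symm, h1.symm⟩
    · exact absurd (h1.trans h2.symm) huu'
  have hex2 : ∀ z : X, ∃ z', z ≠ z' := by
    intro z
    obtain ⟨z', hz'⟩ := exists_notMem ({z} : Finset X) (by rw [Finset.card_singleton]; omega)
    exact ⟨z', fun hc => hz' (by rw [hc]; exact Finset.mem_singleton_self _)⟩
  have hval : ∀ (z : X) (S : Finset (Fin n)),
      f z (qS S u u') = u ∨ f z (qS S u u') = u' := by
    intro z S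
    obtain ⟨z', hzz'⟩ := hex2 z
    rcases hcompl z z' hzz' S with ⟨h, _⟩ | ⟨h, _⟩
    · exact Or.inl h
    · exact Or.inr h
  have hzind : ∀ (z z'' : X) (S : Finset (Fin n)),
      f z (qS S u u') = f z'' (qS S u u') := by
    intro z z'' S
    by_cases hzz : z = z''
    · rw [hzz]
    · obtain ⟨z', hz'⟩ := exists_notMem ({z, z''} : Finset X)
        (lt_of_le_of_lt (Finset.card_insert_le _ _) (by rw [Finset.card_singleton]; omega))
      have hz1 : z ≠ z' := fun hc => hz' (by rw [← hc]; simp)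
      have hz2 : z'' ≠ z' := fun hc => hz' (by rw [← hc]; simp)
      rcases hcompl z z' hz1 S with ⟨h1, h2⟩ | ⟨h1, h2⟩ <;>
        rcases hcompl z'' z' hz2 S with ⟨h3, h4⟩ | ⟨h3, h4⟩
      · rw [h1, h3]
      · exact absurd (h2.symm.trans h4) huu'.symm
      · exact absurd (h2.symm.trans h4) huu'
      · rw [h1, h3]
  set Win : Finset (Fin n) → Prop := fun S => f x₀ (qS S u u') = u with hWin
  have hWuniv : Win Finset.univ := by
    have hq : qS (Finset.univ : Finset (Fin n)) u u' = fun _ => u :=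
      funext fun i => if_pos (Finset.mem_univ i)
    simp only [hWin, hq]
    exact hunan x₀ u
  have hWempty : ¬ Win (∅ : Finset (Fin n)) := by
    have hq : qS (∅ : Finset (Fin n)) u u' = fun _ => u' :=
      funext fun i => if_neg (Finset.notMem_empty i)
    simp only [hWin, hq]
    rw [hunan x₀ u']
    exact huu'.symm
  have hdual : ∀ S : Finset (Fin n), Win S ↔ ¬ Win Sᶜ := by
    intro S
    obtain ⟨z', hz'⟩ := hex2 x₀
    rcases hcompl x₀ z' hz' S with ⟨h1, h2⟩ | ⟨h1, h2⟩
    · refine iff_of_true h1 ?_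
      intro hw
      exact huu' ((hw.symm.trans (hzind x₀ z' Sᶜ)).trans h2)
    · refine iff_of_false ?_ ?_
      · intro hw
        exact huu' (hw.symm.trans h1)
      · intro hw
        exact hw ((hzind x₀ z' Sᶜ).trans h2)
  have hinter : ∀ S T : Finset (Fin n), Win S → Win T → Win (S ∩ T) := by
    intro S T hS hT
    obtain ⟨z₂, h12⟩ := hex2 x₀
    obtain ⟨z₃, hz₃⟩ := exists_notMem ({x₀, z₂} : Finset X)
      (lt_of_le_of_lt (Finset.card_insert_le _ _) (by rw [Finset.card_singleton]; omega))
    have h13 : x₀ ≠ z₃ := fun hc => hz₃ (by rw [← hc]; simp)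
    have h23 : z₂ ≠ z₃ := fun hc => hz₃ (by rw [← hc]; simp)
    have hB := B03 hC hunan hρ hm h12 h13 h23
      (qS S u u') (qS T u u') (qS (S ∩ T)ᶜ u u') u u' huu'
      (fun i => by
        by_cases hiS : i ∈ S
        · left; simp [qS, hiS]
        · right; right
          have hc : i ∈ (S ∩ T)ᶜ := by simp [Finset.mem_inter, hiS]
          simp only [qS]
          exact (if_pos hc).symm)
      (fun i => by
        by_cases hiST : i ∈ S ∩ T
        · right; right
          have hnc : i ∉ (S ∩ T)ᶜ := fun hcon => (Finset.mem_compl.mp hcon) hiST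
          simp only [qS]
          exact (if_neg hnc).symm
        · by_cases hiS : i ∈ S
          · right; left
            have hiT : i ∉ T := fun hc => hiST (Finset.mem_inter.mpr ⟨hiS, hc⟩)
            simp [qS, hiT]
          · left; simp [qS, hiS])
    rcases hB with h | h | h
    · exact absurd (h.trans hS) huu'.symm
    · exact absurd ((h.trans (hzind z₂ x₀ T)).trans hT) huu'.symm
    · have h3 : f x₀ (qS (S ∩ T)ᶜ u u') = u' := (hzind x₀ z₃ _).trans h.symm
      refine (hdual (S ∩ T)).mpr ?_
      intro hw
      exact huu' (hw.symm.trans h3)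
  have hmono : ∀ S T : Finset (Fin n), Win S → S ⊆ T → Win T := by
    intro S T hS hsub
    by_contra hT
    have hTc : Win Tᶜ := by
      by_contra h2
      exact hT ((hdual T).mpr h2)
    have hint := hinter S Tᶜ hS hTc
    have hemp : S ∩ Tᶜ = ∅ := by
      ext i
      simp only [Finset.mem_inter, Finset.mem_compl, Finset.notMem_empty, iff_false,
        not_and, not_not]
      intro hiS
      exact hsub hiS
    rw [hemp] at hint
    exact hWempty hint
  have hdsing : ∃ d : Fin n, Win {d} := by
    by_contra hc
    push_neg at hc
    have key : ∀ s : Finset (Fin n), Win sᶜ := by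
      intro s
      induction s using Finset.induction_on with
      | empty => simpa using hWuniv
      | @insert a s _ ih =>
        have h1 : Win ({a}ᶜ : Finset (Fin n)) := by
          by_contra h2
          exact hc a ((hdual {a}).mpr h2)
        have h3 := hinter _ _ ih h1
        have h4 : sᶜ ∩ ({a}ᶜ : Finset (Fin n)) = (insert a s)ᶜ := by
          ext i
          simp only [Finset.mem_inter, Finset.mem_compl, Finset.mem_insert,
            Finset.mem_singleton]
          tauto
        rwa [h4] at h3
    have := key Finset.univ
    rw [Finset.compl_univ] at this
    exact hWempty this
  obtain ⟨d, hd⟩ := hdsing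
  refine ⟨d, fun z S => ?_⟩
  by_cases hdS : d ∈ S
  · rw [if_pos hdS]
    have hWS : Win S := hmono {d} S hd (Finset.singleton_subset_iff.mpr hdS)
    exact (hzind z x₀ S).trans hWS
  · rw [if_neg hdS]
    rcases hval z S with h | h
    · exfalso
      have hWS : Win S := (hzind x₀ z S).trans h
      have hint := hinter S {d} hWS hd
      have hemp : S ∩ {d} = ∅ := by
        ext i
        simp only [Finset.mem_inter, Finset.mem_singleton, Finset.notMem_empty, iff_false,
          not_and]
        intro hiS hid
        exact hdS (hid ▸ hiS)
      rw [hemp] at hint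
      exact hWempty hint
    · exact h

lemma master (hC : ∀ M : X → Fin n → P, (∀ i, Function.Surjective fun x => M x i) →
      Function.Surjective fun x => f x (M x))
    (hunan : ∀ (x : X) (v : P), f x (fun _ => v) = v)
    (hρ : 2 ≤ Fintype.card P) (hm : Fintype.card P < Fintype.card X) (hn : 0 < n) :
    ∃ d : Fin n, ∀ (z : X) (q : Fin n → P), f z q = q d := by
  classical
  haveI : Nonempty (Fin n) := ⟨⟨0, hn⟩⟩
  have hpair : ∀ u u' : P, ∃ d : Fin n, u ≠ u' →
      ∀ (z : X) (S : Finset (Fin n)), f z (qS S u u') = if d ∈ S then u else u' := by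
    intro u u'
    by_cases h : u ≠ u'
    · obtain ⟨d, hd⟩ := pairDict hC hunan hρ hm h
      exact ⟨d, fun _ => hd⟩
    · exact ⟨Classical.arbitrary (Fin n), fun h' => absurd h' h⟩
  choose dd hdd using hpair
  have hex2 : ∀ z : X, ∃ z', z ≠ z' := by
    intro z
    obtain ⟨z', hz'⟩ := exists_notMem ({z} : Finset X) (by rw [Finset.card_singleton]; omega)
    exact ⟨z', fun hc => hz' (by rw [hc]; exact Finset.mem_singleton_self _)⟩
  haveI : Nonempty X := Fintype.card_pos_iff.mp (by omega)
  -- contagion between pairs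
  have hK : ∀ y p q' : P, y ≠ p → q' ≠ p → dd p q' = dd y p := by
    intro y p q' hyp hq'p
    set S : Finset (Fin n) := {dd y p} with hS
    have x₁ : X := Classical.arbitrary X
    obtain ⟨z', hzz'⟩ := hex2 x₁
    have hB := B0 hC hunan hρ hm hzz' (qS S p q') (qS S y p) p
      (fun i => by
        by_cases hi : i ∈ S
        · left; simp [qS, hi]
        · right; simp [qS, hi])
    have hR : f z' (qS S y p) = y := by
      rw [hdd y p hyp z' S]
      exact if_pos (Finset.mem_singleton_self _)
    rcases hB with h | h
    · rw [hdd p q' hq'p.symm x₁ S] at h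
      by_cases hmem : dd p q' ∈ S
      · exact Finset.mem_singleton.mp (hS ▸ hmem)
      · rw [if_neg hmem] at h
        exact absurd h.symm hq'p
    · rw [hR] at h
      exact absurd h.symm hyp
  have hflip : ∀ u u' c : P, u ≠ u' → c ≠ u' → dd u u' = dd u' c :=
    fun u u' c h hc => (hK u u' c h hc).symm
  obtain ⟨u₀, u₁, hu01⟩ := Fintype.exists_pair_of_one_lt_card (by omega : 1 < Fintype.card P)
  set d : Fin n := dd u₀ u₁ with hd
  have hAll : ∀ u u' : P, u ≠ u' → dd u u' = d := by
    intro u u' h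
    by_cases h0 : u' = u₀
    · subst h0
      exact hflip u u' u₁ h (Ne.symm hu01)
    · have h1 : dd u u' = dd u' u₀ := hflip u u' u₀ h (fun hc => h0 hc.symm)
      have h2 : dd u' u₀ = dd u₀ u₁ := hflip u' u₀ u₁ (fun hc => h0 hc) (Ne.symm hu01)
      rw [h1, h2, hd]
  refine ⟨d, fun z q => ?_⟩
  set p : P := q d with hp
  obtain ⟨y₀, hy₀⟩ := Fintype.exists_ne_of_one_lt_card (by omega : 1 < Fintype.card P) p
  set Q : Finset (Fin n) := Finset.univ.filter (fun i => q i ≠ p) with hQ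
  have hdQ : d ∉ Q := by
    simp only [hQ, Finset.mem_filter]
    intro hc
    exact hc.2 hp.symm
  obtain ⟨z', hzz'⟩ := hex2 z
  have hB := B0 hC hunan hρ hm hzz' q (qS Q p y₀) p
    (fun i => by
      by_cases hi : i ∈ Q
      · right; simp [qS, hi]
      · left
        simp only [hQ, Finset.mem_filter, Finset.mem_univ, true_and, not_not] at hi
        exact hi.symm)
  rcases hB with h | h
  · exact h.symm
  · exfalso
    rw [hdd p y₀ (Ne.symm hy₀) z' Q] at h
    rw [hAll p y₀ (Ne.symm hy₀), if_neg hdQ] at h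
    exact hy₀ h.symm

end CAFProof

/-- **Theorem 1.** For `m > ρ ≥ 2`, every citizen sovereign and independent CAF is
essentially a dictatorship. -/
theorem citizenSovereign_independent_essentiallyDictatorship
    {n ρ m : ℕ} (hn : 2 ≤ n) (hρ : 2 ≤ ρ) (hm : ρ < m)
    (X P : Type) [Fintype X] [Fintype P]
    (hX : Fintype.card X = m) (hP : Fintype.card P = ρ)
    (α : Profile n X P → Classif X P)
    (hCS : CitizenSovereign α) (hInd : Independent α) :
    EssentiallyDictatorship α := by
  classical
  subst hX hP
  haveI : Nonempty P := Fintype.card_pos_iff.mp (by omega)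
  -- fillers for canonical profiles
  have hσex : ∀ x : X, ∃ e : X → P, ∀ p : P, ∃ y, y ≠ x ∧ e y = p := by
    intro x
    have hcard : (Finset.univ : Finset P).card ≤ (Finset.univ.erase x).card := by
      rw [Finset.card_erase_of_mem (Finset.mem_univ _), Finset.card_univ, Finset.card_univ]
      omega
    obtain ⟨e, _, he2⟩ :=
      CAFProof.exists_fill (Finset.univ.erase x) (Finset.univ : Finset P)
        (Classical.arbitrary P) hcard
    refine ⟨e, fun p => ?_⟩
    obtain ⟨y, hy, hye⟩ := he2 p (Finset.mem_univ _)
    exact ⟨y, Finset.ne_of_mem_erase hy, hye⟩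
  choose σ hσ using hσex
  have hcano : ∀ (x : X) (q : Fin n → P) (i : Fin n),
      Function.Surjective (fun y => if y = x then q i else σ x y) := by
    intro x q i p
    obtain ⟨y, hyx, hyp⟩ := hσ x p
    exact ⟨y, by simp [hyx, hyp]⟩
  set F0 : X → (Fin n → P) → P :=
    fun x q => (α (fun i => ⟨fun y => if y = x then q i else σ x y, hcano x q i⟩)).1 x with hF0
  have hrep : ∀ (c : Profile n X P) (x : X), (α c).1 x = F0 x (fun i => (c i).1 x) := by
    intro c x
    exact hInd x c _ fun i => by simp
  have hsurj : ∀ x, Function.Surjective (F0 x) := by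
    intro x p
    obtain ⟨c, hc⟩ := hCS x p
    exact ⟨fun i => (c i).1 x, (hrep c x).symm.trans hc⟩
  have hC : ∀ M : X → Fin n → P, (∀ i, Function.Surjective fun x => M x i) →
      Function.Surjective fun x => F0 x (M x) := by
    intro M hrows p
    set c : Profile n X P := fun i => ⟨fun y => M y i, hrows i⟩ with hc
    obtain ⟨x, hx⟩ := (α c).2 p
    refine ⟨x, ?_⟩
    have h1 := hrep c x
    show F0 x (M x) = p
    rw [show F0 x (M x) = (α c).1 x from h1.symm]
    exact hx
  obtain ⟨vm, hvinj, hvm⟩ := CAFProof.step1 hsurj hC hρ hm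
  have hvbij : Function.Bijective vm := ⟨hvinj, Finite.surjective_of_injective hvinj⟩
  set πe : P ≃ P := Equiv.ofBijective vm hvbij with hπe
  set F : X → (Fin n → P) → P := fun x q => πe (F0 x q) with hF
  have hunanF : ∀ (x : X) (v : P), F x (fun _ => v) = v := by
    intro x v
    have h1 : vm (πe.symm v) = v := πe.apply_symm_apply v
    have h2 := hvm x (πe.symm v)
    rw [h1] at h2
    show πe (F0 x (fun _ => v)) = v
    rw [h2]
    exact πe.apply_symm_apply v
  have hCF : ∀ M : X → Fin n → P, (∀ i, Function.Surjective fun x => M x i) →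
      Function.Surjective fun x => F x (M x) := by
    intro M hrows p
    obtain ⟨x, hx⟩ := hC M hrows (πe.symm p)
    refine ⟨x, ?_⟩
    show πe (F0 x (M x)) = p
    rw [show F0 x (M x) = πe.symm p from hx]
    exact πe.apply_symm_apply p
  obtain ⟨d, hd⟩ := CAFProof.master hCF hunanF hρ hm (by omega)
  refine ⟨d, πe.symm, fun c => funext fun x => ?_⟩
  have h1 := hrep c x
  have h2 := hd x (fun i => (c i).1 x)
  show (α c).1 x = πe.symm ((c d).1 x)
  rw [h1]
  have h3 : πe (F0 x (fun i => (c i).1 x)) = (c d).1 x := h2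
  rw [← h3]
  exact (πe.symm_apply_apply _).symm
end

section
/- For m > ρ ≥ 2, every classification aggregation function that is citizen sovereign and independent satisfies generalized unanimity, i.e., there exists a permutation π of P such that α(c,...,c) = π ∘ c for every classification c. -/
/-- **Lemma 1.** For `m > ρ ≥ 2`, every citizen sovereign and independent CAF satisfies
generalized unanimity. -/
theorem citizenSovereign_independent_generalizedUnanimity
    {n ρ m : ℕ} (hn : 2 ≤ n) (hρ : 2 ≤ ρ) (hm : ρ < m)
    (X P : Type) [Fintype X] [Fintype P]
    (hX : Fintype.card X = m) (hP : Fintype.card P = ρ)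
    (α : Profile n X P → Classif X P)
    (hCS : CitizenSovereign α) (hInd : Independent α) :
    GeneralizedUnanimity α := by
  classical
  have hPne : Nonempty P := by
    rw [← Fintype.card_pos_iff, hP]; omega
  have hPnt : Nontrivial P := by
    rw [← Fintype.one_lt_card_iff_nontrivial, hP]; omega
  have hXne : Nonempty X := by
    rw [← Fintype.card_pos_iff, hX]; omega
  obtain ⟨φ⟩ : Nonempty (P ↪ X) := by
    rw [Function.Embedding.nonempty_iff_card_le, hP, hX]; omega
  -- surjective classification with a prescribed value at one object
  have hsurj_at : ∀ (x : X) (p : P), ∃ c : Classif X P, c.1 x = p := by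
    intro x p
    refine ⟨⟨Function.invFun φ ∘ (Equiv.swap x (φ p)), ?_⟩, ?_⟩
    · exact (Function.invFun_surjective φ.injective).comp (Equiv.swap x (φ p)).surjective
    · show Function.invFun φ (Equiv.swap x (φ p) x) = p
      rw [Equiv.swap_apply_left]
      exact Function.leftInverse_invFun φ.injective p
  choose chat hchat using hsurj_at
  set g : X → P → P := fun x p => (α (fun _ => chat x p)).1 x with hg
  have key : ∀ (x : X) (q : P) (c : Profile n X P),
      (∀ i, (c i).1 x = q) → (α c).1 x = g x q := by
    intro x q c h
    exact hInd x c (fun _ => chat x q) (fun i => by rw [h i, hchat])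
  -- core lemma: along any injective transversal, the diagonal maps cover P
  have core : ∀ e : P → X, Function.Injective e →
      Function.Surjective (fun q => g (e q) q) := by
    intro e he r
    obtain ⟨q₀, hq₀⟩ := exists_ne r
    choose cw hcw using fun w => hCS w q₀
    set F : Fin n → X → P := fun i w =>
      if h : ∃ q, e q = w then h.choose else ((cw w) i).1 w with hF
    have hFe : ∀ i q, F i (e q) = q := by
      intro i q
      have hq : ∃ q', e q' = e q := ⟨q, rfl⟩
      simp only [hF, dif_pos hq]
      exact he hq.choose_spec
    have hFsur : ∀ i, Function.Surjective (F i) := fun i q => ⟨e q, hFe i q⟩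
    set b : Profile n X P := fun i => ⟨F i, hFsur i⟩ with hb
    obtain ⟨w, hw⟩ := (α b).2 r
    by_cases h : ∃ q, e q = w
    · obtain ⟨q, rfl⟩ := h
      refine ⟨q, ?_⟩
      show g (e q) q = r
      rw [← key (e q) q b (fun i => hFe i q)]
      exact hw
    · exfalso
      have h1 : (α b).1 w = (α (cw w)).1 w := by
        refine hInd w b (cw w) (fun i => ?_)
        show F i w = ((cw w) i).1 w
        simp only [hF, dif_neg h]
      rw [hcw w] at h1
      exact hq₀ (by rw [← h1, hw])
  -- the diagonal map does not depend on the object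
  have gconst : ∀ (x y : X) (p : P), g x p = g y p := by
    intro x y p
    rcases eq_or_ne x y with rfl | hxy
    · rfl
    obtain ⟨ψ⟩ : Nonempty (P ↪ {z : X // z ≠ x}) := by
      rw [Function.Embedding.nonempty_iff_card_le, hP]
      have h1 : Fintype.card {z : X // ¬ z = x} = m - 1 := by
        rw [Fintype.card_subtype_compl, Fintype.card_subtype_eq, hX]
      have h2 : Fintype.card {z : X // z ≠ x} = Fintype.card {z : X // ¬ z = x} :=
        Fintype.card_congr (Equiv.refl _)
      rw [h2, h1]; omega
    set e : P → X := fun q =>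
      ((Equiv.swap (⟨y, hxy.symm⟩ : {z : X // z ≠ x}) (ψ p)) (ψ q) : X) with he_def
    have he : Function.Injective e :=
      Subtype.val_injective.comp ((Equiv.injective _).comp ψ.injective)
    have hep : e p = y := by
      show ((Equiv.swap (⟨y, hxy.symm⟩ : {z : X // z ≠ x}) (ψ p)) (ψ p) : X) = y
      rw [Equiv.swap_apply_right]
    have hex : ∀ q, e q ≠ x := fun q =>
      ((Equiv.swap (⟨y, hxy.symm⟩ : {z : X // z ≠ x}) (ψ p)) (ψ q)).2
    have heq : ∀ q, q ≠ p → e q ≠ y := by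
      intro q hq hcontra
      apply hq
      apply ψ.injective
      have : (Equiv.swap (⟨y, hxy.symm⟩ : {z : X // z ≠ x}) (ψ p)) (ψ q)
          = (⟨y, hxy.symm⟩ : {z : X // z ≠ x}) := Subtype.val_injective hcontra
      have h3 := congrArg (⇑(Equiv.swap (⟨y, hxy.symm⟩ : {z : X // z ≠ x}) (ψ p))) this
      rwa [Equiv.swap_apply_self, Equiv.swap_apply_left] at h3
    set e' : P → X := fun q => Equiv.swap x y (e q) with he'_def
    have he' : Function.Injective e' := (Equiv.swap x y).injective.comp he
    have he'p : e' p = x := by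
      show Equiv.swap x y (e p) = x
      rw [hep, Equiv.swap_apply_right]
    have he'q : ∀ q, q ≠ p → e' q = e q := fun q hq =>
      Equiv.swap_apply_of_ne_of_ne (hex q) (heq q hq)
    have hB := core e he
    have hB' := core e' he'
    have hBinj : Function.Injective (fun q => g (e q) q) :=
      Finite.injective_iff_surjective.2 hB
    obtain ⟨q, hq⟩ := hB' (g (e p) p)
    rcases eq_or_ne q p with rfl | hqp
    · have hq2 : g (e' q) q = g (e q) q := hq
      rw [he'p, hep] at hq2
      exact hq2
    · exfalso
      have hq2 : g (e q) q = g (e p) p := by rw [← he'q q hqp]; exact hq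
      exact hqp (hBinj (show (fun q => g (e q) q) q = (fun q => g (e q) q) p from hq2))
  obtain ⟨x₀⟩ := hXne
  have hsur : Function.Surjective (g x₀) := by
    intro r
    obtain ⟨q, hq⟩ := core φ φ.injective r
    exact ⟨q, by rw [gconst x₀ (φ q) q]; exact hq⟩
  have hbij : Function.Bijective (g x₀) := Finite.surjective_iff_bijective.1 hsur
  refine ⟨Equiv.ofBijective _ hbij, fun c => ?_⟩
  funext x
  have h1 : (α (fun _ => c)).1 x = g x (c.1 x) := key x (c.1 x) _ (fun i => rfl)
  rw [h1, gconst x x₀ (c.1 x)]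
  rfl
end

section
/- For m > ρ ≥ 2, every classification aggregation function that is independent and satisfies generalized unanimity is essentially a dictatorship, i.e., there exist an individual d ∈ N and a permutation π of P such that α(c) = π ∘ c_d for every profile c. -/
/-- **Lemma 2.** For `m > ρ ≥ 2`, every independent CAF satisfying generalized unanimity
is essentially a dictatorship. -/
theorem independent_generalizedUnanimity_essentiallyDictatorship
    {n ρ m : ℕ} (hn : 2 ≤ n) (hρ : 2 ≤ ρ) (hm : ρ < m)
    (X P : Type) [Fintype X] [Fintype P]
    (hX : Fintype.card X = m) (hP : Fintype.card P = ρ)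
    (α : Profile n X P → Classif X P)
    (hInd : Independent α) (hGU : GeneralizedUnanimity α) :
    EssentiallyDictatorship α := by
  classical
  obtain ⟨π, hπ⟩ := hGU
  haveI hPnt : Nontrivial P := Fintype.one_lt_card_iff_nontrivial.mp (by rw [hP]; omega)
  haveI hXnt : Nontrivial X := Fintype.one_lt_card_iff_nontrivial.mp (by rw [hX]; omega)
  have hXne : Nonempty X := inferInstance
  -- existence of classifications with a prescribed value
  have hsurj_exists : ∀ (x : X) (p : P), ∃ cl : Classif X P, cl.1 x = p := by
    intro x p
    obtain ⟨ψ⟩ : Nonempty (P ↪ X) :=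
      Function.Embedding.nonempty_of_card_le (by rw [hX, hP]; omega)
    set g : X → P := fun z => if h : ∃ q, ψ q = z then h.choose else p with hg_def
    have hg : Function.Surjective g := by
      intro q
      refine ⟨ψ q, ?_⟩
      have hex : ∃ q', ψ q' = ψ q := ⟨q, rfl⟩
      have h1 : hex.choose = q := ψ.injective hex.choose_spec
      simp only [hg_def, dif_pos hex, h1]
    obtain ⟨x₀, hx₀⟩ := hg p
    refine ⟨⟨g ∘ Equiv.swap x x₀, hg.comp (Equiv.swap x x₀).surjective⟩, ?_⟩
    simp [Equiv.swap_apply_left, hx₀]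
  choose E hEval using hsurj_exists
  -- the per-object aggregation functions
  let hfun : X → (Fin n → P) → P := fun x w => (α (fun i => E x (w i))).1 x
  have hL3 : ∀ (c : Profile n X P) (x : X), (α c).1 x = hfun x (fun i => (c i).1 x) :=
    fun c x => hInd x c _ (fun i => (hEval x ((c i).1 x)).symm)
  have hL4 : ∀ (x : X) (p : P), hfun x (fun _ => p) = π p := by
    intro x p
    have h2 := hL3 (fun _ => E x p) x
    have h3 : (fun i : Fin n => (E x p).1 x) = (fun _ : Fin n => p) := by
      funext i; rw [hEval]
    rw [h3] at h2
    calc hfun x (fun _ => p) = (α (fun _ => E x p)).1 x := h2.symm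
      _ = π ((E x p).1 x) := congrFun (hπ (E x p)) x
      _ = π p := by rw [hEval]
  -- the family surjectivity tool
  have hL5 : ∀ (f : X → Fin n → P), (∀ i, Function.Surjective fun x => f x i) →
      ∀ p, ∃ x, hfun x (f x) = p := by
    intro f hf p
    obtain ⟨x, hx⟩ := (α (fun i => ⟨fun x => f x i, hf i⟩)).2 p
    exact ⟨x, (hL3 (fun i => ⟨fun x => f x i, hf i⟩) x).symm.trans hx⟩
  -- a third object
  have hX3 : ∀ a b : X, ∃ z, z ≠ a ∧ z ≠ b := by
    intro a b
    have h1 : (({a, b} : Finset X)ᶜ).Nonempty := by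
      apply Finset.card_pos.mp
      rw [Finset.card_compl]
      have h2 : ({a, b} : Finset X).card ≤ 2 :=
        (Finset.card_insert_le _ _).trans (by simp)
      rw [hX]; omega
    obtain ⟨z, hz⟩ := h1
    simp only [Finset.mem_compl, Finset.mem_insert, Finset.mem_singleton, not_or] at hz
    exact ⟨z, hz.1, hz.2⟩
  -- Key two-vector lemma
  have hK2 : ∀ (x y : X), x ≠ y → ∀ (cc : P) (w w' : Fin n → P),
      (∀ i, w i = cc ∨ w' i = cc) → hfun x w = π cc ∨ hfun y w' = π cc := by
    intro x y hxy cc w w' hcov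
    by_contra hcon
    push_neg at hcon
    obtain ⟨hcx, hcy⟩ := hcon
    obtain ⟨s₀, hs₀⟩ : ∃ s₀ : P, s₀ ≠ cc := exists_ne cc
    have hcard : Fintype.card ↥(({cc} : Finset P)ᶜ) ≤ (({x, y} : Finset X)ᶜ).card := by
      rw [Fintype.card_coe, Finset.card_compl, Finset.card_compl, Finset.card_singleton,
        hP, hX]
      have h2 : ({x, y} : Finset X).card = 2 := by
        rw [Finset.card_insert_of_notMem (by simp [hxy]), Finset.card_singleton]
      rw [h2]; omega
    obtain ⟨τ, hτ⟩ := Function.Embedding.exists_of_card_le_finset hcard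
    set f : X → Fin n → P := fun z =>
      if z = x then w else if z = y then w' else
      if h : ∃ q, τ q = z then (fun _ => (h.choose : P)) else (fun _ => s₀) with hf_def
    have hrng : ∀ q, τ q ≠ x ∧ τ q ≠ y := by
      intro q
      have hz := hτ (Set.mem_range_self q)
      simpa only [Finset.coe_compl, Set.mem_compl_iff, Finset.coe_insert, Set.mem_insert_iff,
        Finset.coe_singleton, Set.mem_singleton_iff, not_or] using hz
    have hfsurj : ∀ i, Function.Surjective fun z => f z i := by
      intro i p
      by_cases hp : p = cc
      · rcases hcov i with h | h
        · exact ⟨x, by simp [hf_def, h, hp]⟩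
        · exact ⟨y, by simp [hf_def, Ne.symm hxy, h, hp]⟩
      · have hpmem : p ∈ ({cc} : Finset P)ᶜ := by simp [hp]
        refine ⟨τ ⟨p, hpmem⟩, ?_⟩
        have hex : ∃ q', τ q' = τ ⟨p, hpmem⟩ := ⟨⟨p, hpmem⟩, rfl⟩
        have h1 : hex.choose = ⟨p, hpmem⟩ := τ.injective hex.choose_spec
        show f (τ ⟨p, hpmem⟩) i = p
        rw [hf_def]
        simp only [if_neg (hrng _).1, if_neg (hrng _).2, dif_pos hex, h1]
    obtain ⟨z, hzv⟩ := hL5 f hfsurj (π cc)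
    by_cases hzx : z = x
    · subst hzx
      have hfx : f z = w := by simp only [hf_def]; rw [if_pos trivial]
      rw [hfx] at hzv
      exact hcx hzv
    by_cases hzy : z = y
    · subst hzy
      have hfy : f z = w' := by simp only [hf_def]; rw [if_neg hzx, if_pos trivial]
      rw [hfy] at hzv
      exact hcy hzv
    by_cases hexz : ∃ q, τ q = z
    · have hfz : f z = fun _ => (hexz.choose : P) := by
        simp only [hf_def]
        rw [if_neg hzx, if_neg hzy, dif_pos hexz]
      rw [hfz, hL4] at hzv
      have h1 : (hexz.choose : P) = cc := π.injective hzv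
      have h2 := hexz.choose.2
      rw [h1] at h2
      simp at h2
    · have hfz : f z = fun _ => s₀ := by
        simp only [hf_def]
        rw [if_neg hzx, if_neg hzy, dif_neg hexz]
      rw [hfz, hL4] at hzv
      exact hs₀ (π.injective hzv)
  -- decisive coalitions
  let Dec : Finset (Fin n) → Prop := fun A =>
    ∀ (x : X) (cc : P) (w : Fin n → P), (∀ i ∈ A, w i = cc) → hfun x w = π cc
  have hDecUniv : Dec Finset.univ := by
    intro x cc w hw
    have h1 : w = fun _ => cc := funext fun i => hw i (Finset.mem_univ i)
    rw [h1, hL4]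
  have hDecEmpty : ¬ Dec ∅ := by
    intro h
    obtain ⟨a, b, hab⟩ := Fintype.exists_pair_of_one_lt_card (α := P) (by rw [hP]; omega)
    obtain ⟨x⟩ := hXne
    have h1 := h x a (fun _ => b) (by simp)
    rw [hL4] at h1
    exact hab (π.injective h1).symm
  -- dichotomy
  have hDich : ∀ A : Finset (Fin n), ¬ Dec A → Dec Aᶜ := by
    intro A hA
    have hA' : ∃ x cc w, (∀ i ∈ A, w i = cc) ∧ hfun x w ≠ π cc := by
      by_contra h
      push_neg at h
      exact hA (fun x cc w hw => h x cc w hw)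
    obtain ⟨x₀, c₀, w₀, hw₀, hx₀⟩ := hA'
    have S1 : ∀ y, y ≠ x₀ → ∀ w', (∀ i ∉ A, w' i = c₀) → hfun y w' = π c₀ := by
      intro y hy w' hw'
      rcases hK2 x₀ y (Ne.symm hy) c₀ w₀ w' (fun i => by
        by_cases h : i ∈ A
        · exact Or.inl (hw₀ i h)
        · exact Or.inr (hw' i h)) with h | h
      · exact absurd h hx₀
      · exact h
    have S2 : ∀ c₁, c₁ ≠ c₀ → ∀ y, y ≠ x₀ → ∀ z, z ≠ y → ∀ w',
        (∀ i ∉ A, w' i = c₁) → hfun z w' = π c₁ := by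
      intro c₁ hc₁ y hy z hz w' hw'
      have hu := S1 y hy (fun i => if i ∈ A then c₁ else c₀) (fun i hi => by simp [hi])
      rcases hK2 y z (Ne.symm hz) c₁ (fun i => if i ∈ A then c₁ else c₀) w' (fun i => by
        by_cases h : i ∈ A
        · exact Or.inl (by simp [h])
        · exact Or.inr (hw' i h)) with h | h
      · exact absurd (π.injective (hu.symm.trans h)).symm hc₁
      · exact h
    have S2' : ∀ c₁, c₁ ≠ c₀ → ∀ z w', (∀ i ∉ A, w' i = c₁) → hfun z w' = π c₁ := by
      intro c₁ hc₁ z w' hw'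
      obtain ⟨y, hy1, hy2⟩ := hX3 z x₀
      exact S2 c₁ hc₁ y hy2 z (Ne.symm hy1) w' hw'
    have S3 : ∀ z w', (∀ i ∉ A, w' i = c₀) → hfun z w' = π c₀ := by
      intro z w' hw'
      obtain ⟨c₁, hc₁⟩ := exists_ne c₀
      obtain ⟨y, hy1, _⟩ := hX3 z x₀
      have hu := S2' c₁ hc₁ y (fun i => if i ∈ A then c₀ else c₁) (fun i hi => by simp [hi])
      rcases hK2 y z hy1 c₀ (fun i => if i ∈ A then c₀ else c₁) w' (fun i => by
        by_cases h : i ∈ A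
        · exact Or.inl (by simp [h])
        · exact Or.inr (hw' i h)) with h | h
      · exact absurd (π.injective (hu.symm.trans h)) hc₁
      · exact h
    intro x cc w hw
    have hw' : ∀ i ∉ A, w i = cc := fun i hi => hw i (Finset.mem_compl.mpr hi)
    by_cases h : cc = c₀
    · subst h; exact S3 x w hw'
    · exact S2' cc h x w hw'
  -- no three decisive sets with empty intersection of this shape
  have hInter3 : ∀ A B : Finset (Fin n), Dec A → Dec B → Dec (Aᶜ ∪ Bᶜ) → False := by
    intro A B hA hB hC
    obtain ⟨cc, c', hcc'⟩ := Fintype.exists_pair_of_one_lt_card (α := P) (by rw [hP]; omega)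
    obtain ⟨x1, x2, hx12⟩ := Fintype.exists_pair_of_one_lt_card (α := X) (by rw [hX]; omega)
    obtain ⟨x3, hx31, hx32⟩ := hX3 x1 x2
    set v1 : Fin n → P := fun i => if i ∈ A then c' else cc with hv1_def
    set v2 : Fin n → P := fun i => if i ∈ B then c' else cc with hv2_def
    set v3 : Fin n → P := fun i => if i ∈ Aᶜ ∪ Bᶜ then c' else cc with hv3_def
    have hv1 : hfun x1 v1 = π c' :=
      hA x1 c' v1 (fun i hi => by simp only [hv1_def]; rw [if_pos hi])
    have hv2 : hfun x2 v2 = π c' :=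
      hB x2 c' v2 (fun i hi => by simp only [hv2_def]; rw [if_pos hi])
    have hv3 : hfun x3 v3 = π c' :=
      hC x3 c' v3 (fun i hi => by simp only [hv3_def]; rw [if_pos hi])
    have hcard : Fintype.card ↥(({cc, c'} : Finset P)ᶜ) ≤ (({x1, x2, x3} : Finset X)ᶜ).card := by
      rw [Fintype.card_coe, Finset.card_compl, Finset.card_compl, hP, hX]
      have h2 : ({cc, c'} : Finset P).card = 2 := by
        rw [Finset.card_insert_of_notMem (by simp [hcc']), Finset.card_singleton]
      have h3 : ({x1, x2, x3} : Finset X).card ≤ 3 :=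
        (Finset.card_insert_le _ _).trans (by
          have := Finset.card_insert_le x2 ({x3} : Finset X)
          simp only [Finset.card_singleton] at this ⊢
          omega)
      rw [h2]; omega
    obtain ⟨τ, hτ⟩ := Function.Embedding.exists_of_card_le_finset hcard
    have hrng : ∀ q, τ q ≠ x1 ∧ τ q ≠ x2 ∧ τ q ≠ x3 := by
      intro q
      have hz := hτ (Set.mem_range_self q)
      simpa only [Finset.coe_compl, Set.mem_compl_iff, Finset.coe_insert, Set.mem_insert_iff,
        Finset.coe_singleton, Set.mem_singleton_iff, not_or] using hz
    set f : X → Fin n → P := fun z =>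
      if z = x1 then v1 else if z = x2 then v2 else if z = x3 then v3 else
      if h : ∃ q, τ q = z then (fun _ => (h.choose : P)) else (fun _ => c') with hf_def
    have hfsurj : ∀ i, Function.Surjective fun z => f z i := by
      intro i p
      have hfx1 : ∀ j, f x1 j = v1 j := by
        intro j; simp only [hf_def]; rw [if_pos trivial]
      have hfx2 : ∀ j, f x2 j = v2 j := by
        intro j; simp only [hf_def]; rw [if_neg (Ne.symm hx12), if_pos trivial]
      have hfx3 : ∀ j, f x3 j = v3 j := by
        intro j; simp only [hf_def]; rw [if_neg hx31, if_neg hx32, if_pos trivial]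
      by_cases hp : p = cc
      · by_cases hiA : i ∈ A
        · by_cases hiB : i ∈ B
          · refine ⟨x3, ?_⟩
            have hiC : i ∉ Aᶜ ∪ Bᶜ := by
              simp only [Finset.mem_union, Finset.mem_compl, not_or, not_not]
              exact ⟨hiA, hiB⟩
            show f x3 i = p
            rw [hfx3 i]; simp only [hv3_def]; rw [if_neg hiC, hp]
          · refine ⟨x2, ?_⟩
            show f x2 i = p
            rw [hfx2 i]; simp only [hv2_def]; rw [if_neg hiB, hp]
        · refine ⟨x1, ?_⟩
          show f x1 i = p
          rw [hfx1 i]; simp only [hv1_def]; rw [if_neg hiA, hp]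
      by_cases hp' : p = c'
      · by_cases hiA : i ∈ A
        · refine ⟨x1, ?_⟩
          show f x1 i = p
          rw [hfx1 i]; simp only [hv1_def]; rw [if_pos hiA, hp']
        · refine ⟨x3, ?_⟩
          have hiC : i ∈ Aᶜ ∪ Bᶜ := by
            simp only [Finset.mem_union, Finset.mem_compl]
            exact Or.inl hiA
          show f x3 i = p
          rw [hfx3 i]; simp only [hv3_def]; rw [if_pos hiC, hp']
      · have hpmem : p ∈ ({cc, c'} : Finset P)ᶜ := by simp [hp, hp']
        refine ⟨τ ⟨p, hpmem⟩, ?_⟩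
        have hex : ∃ q', τ q' = τ ⟨p, hpmem⟩ := ⟨⟨p, hpmem⟩, rfl⟩
        have h1 : hex.choose = ⟨p, hpmem⟩ := τ.injective hex.choose_spec
        show f (τ ⟨p, hpmem⟩) i = p
        rw [hf_def]
        simp only [if_neg (hrng _).1, if_neg (hrng _).2.1, if_neg (hrng _).2.2,
          dif_pos hex, h1]
    obtain ⟨z, hzv⟩ := hL5 f hfsurj (π cc)
    by_cases hz1 : z = x1
    · subst hz1
      have hfx : f z = v1 := by simp only [hf_def]; rw [if_pos trivial]
      rw [hfx, hv1] at hzv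
      exact hcc' (π.injective hzv).symm
    by_cases hz2 : z = x2
    · subst hz2
      have hfx : f z = v2 := by simp only [hf_def]; rw [if_neg hz1, if_pos trivial]
      rw [hfx, hv2] at hzv
      exact hcc' (π.injective hzv).symm
    by_cases hz3 : z = x3
    · subst hz3
      have hfx : f z = v3 := by simp only [hf_def]; rw [if_neg hz1, if_neg hz2, if_pos trivial]
      rw [hfx, hv3] at hzv
      exact hcc' (π.injective hzv).symm
    by_cases hexz : ∃ q, τ q = z
    · have hfz : f z = fun _ => (hexz.choose : P) := by
        simp only [hf_def]
        rw [if_neg hz1, if_neg hz2, if_neg hz3, dif_pos hexz]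
      rw [hfz, hL4] at hzv
      have h1 := hexz.choose.2
      rw [π.injective hzv] at h1
      simp at h1
    · have hfz : f z = fun _ => c' := by
        simp only [hf_def]
        rw [if_neg hz1, if_neg hz2, if_neg hz3, dif_neg hexz]
      rw [hfz, hL4] at hzv
      exact hcc' (π.injective hzv).symm
  -- intersection closure
  have hInter : ∀ A B : Finset (Fin n), Dec A → Dec B → Dec (A ∩ B) := by
    intro A B hA hB
    by_contra h
    have h1 := hDich _ h
    rw [Finset.compl_inter] at h1
    exact hInter3 A B hA hB h1
  -- a singleton decisive set exists
  have key : ∀ (k : ℕ) (A : Finset (Fin n)), A.card ≤ k → Dec A → ∃ d : Fin n, Dec {d} := by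
    intro k
    induction k with
    | zero =>
      intro A hcard hdec
      rw [Nat.le_zero, Finset.card_eq_zero] at hcard
      subst hcard
      exact absurd hdec hDecEmpty
    | succ k ih =>
      intro A hcard hdec
      have hAne : A.Nonempty := by
        by_contra h
        rw [Finset.not_nonempty_iff_eq_empty] at h
        subst h
        exact hDecEmpty hdec
      obtain ⟨i, hi⟩ := hAne
      by_cases hdi : Dec {i}
      · exact ⟨i, hdi⟩
      · have h1 : Dec {i}ᶜ := hDich _ hdi
        have h2 : Dec (A ∩ {i}ᶜ) := hInter _ _ hdec h1
        have h3 : A ∩ ({i} : Finset (Fin n))ᶜ = A.erase i := by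
          ext j
          simp [Finset.mem_erase, and_comm, eq_comm]
        rw [h3] at h2
        refine ih _ ?_ h2
        have h4 := Finset.card_erase_of_mem hi
        omega
  obtain ⟨d, hd⟩ := key Finset.univ.card Finset.univ le_rfl hDecUniv
  refine ⟨d, π, fun c => funext fun x => ?_⟩
  rw [hL3 c x]
  exact hd x ((c d).1 x) (fun i => (c i).1 x) (fun i hi => by
    rw [Finset.mem_singleton] at hi
    rw [hi])
end

section
/- For m > ρ ≥ 2, every classification aggregation function that is unanimous and independent is a dictatorship, i.e., there exists an individual d ∈ N such that α(c) = c_d for every profile c. -/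
/-- The two-valued tuple: `p` on coalition `S`, `q` elsewhere. -/
def tup {n : ℕ} {P : Type} (S : Finset (Fin n)) (p q : P) : Fin n → P :=
  fun i => if i ∈ S then p else q

lemma tup_mem {n : ℕ} {P : Type} {S : Finset (Fin n)} (p q : P) {i : Fin n} (h : i ∈ S) :
    tup S p q i = p := if_pos h

lemma tup_notMem {n : ℕ} {P : Type} {S : Finset (Fin n)} (p q : P) {i : Fin n} (h : i ∉ S) :
    tup S p q i = q := if_neg h

lemma tup_compl {n : ℕ} {P : Type} (S : Finset (Fin n)) (p q : P) :
    tup Sᶜ p q = tup S q p := by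
  funext i; by_cases h : i ∈ S <;> simp [tup, h]

lemma tup_univ {n : ℕ} {P : Type} (p q : P) : tup (Finset.univ : Finset (Fin n)) p q = fun _ => p := by
  funext i; simp [tup]

lemma tup_empty {n : ℕ} {P : Type} (p q : P) : tup (∅ : Finset (Fin n)) p q = fun _ => q := by
  funext i; simp [tup]

lemma tup_self {n : ℕ} {P : Type} (S : Finset (Fin n)) (p : P) : tup S p p = fun _ => p := by
  funext i; by_cases h : i ∈ S <;> simp [tup, h]

/-- Fill lemma: a function covering `Q` outside `T`, with all values outside `T`
in `Q ∪ {q₀}`. -/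
lemma exists_fill {X P : Type} [Fintype X] [Fintype P] [DecidableEq X] [DecidableEq P]
    (T : Finset X) (Q : Finset P) (q₀ : P)
    (hcard : T.card + Q.card ≤ Fintype.card X) :
    ∃ g : X → P, (∀ p ∈ Q, ∃ x, x ∉ T ∧ g x = p) ∧ (∀ x, x ∉ T → g x ∈ Q ∨ g x = q₀) := by
  have h1 : Q.card ≤ Tᶜ.card := by
    have := Finset.card_compl (α := X) T
    have h2 : T.card ≤ Fintype.card X := Finset.card_le_univ T
    omega
  obtain ⟨R, hR, hRcard⟩ := Finset.exists_subset_card_eq h1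
  have e : ({x // x ∈ R}) ≃ ({p // p ∈ Q}) := by
    apply Fintype.equivOfCardEq
    rw [Fintype.card_coe, Fintype.card_coe, hRcard]
  refine ⟨fun x => if hx : x ∈ R then (e ⟨x, hx⟩ : P) else q₀, ?_, ?_⟩
  · intro p hp
    refine ⟨(e.symm ⟨p, hp⟩ : X), ?_, ?_⟩
    · have hmem : ((e.symm ⟨p, hp⟩ : { x // x ∈ R }) : X) ∈ R := (e.symm ⟨p, hp⟩).2
      have := hR hmem
      simpa [Finset.mem_compl] using this
    · have hmem : ((e.symm ⟨p, hp⟩ : { x // x ∈ R }) : X) ∈ R := (e.symm ⟨p, hp⟩).2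
      have heq : (⟨((e.symm ⟨p, hp⟩ : { x // x ∈ R }) : X), hmem⟩ : { x // x ∈ R }) = e.symm ⟨p, hp⟩ :=
        Subtype.ext rfl
      simp only [dif_pos hmem, heq, Equiv.apply_symm_apply]
  · intro x hx
    by_cases hxR : x ∈ R
    · left; simp only [dif_pos hxR]; exact (e ⟨x, hxR⟩).2
    · right; simp only [dif_neg hxR]

lemma exists_third {X : Type} [Fintype X] [DecidableEq X] (h : 3 ≤ Fintype.card X)
    (x y : X) : ∃ z, z ≠ x ∧ z ≠ y := by
  have hne : ((Finset.univ.erase x).erase y).Nonempty := by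
    rw [← Finset.card_pos]
    have h1 : (Finset.univ.erase x).card = Fintype.card X - 1 := by
      rw [Finset.card_erase_of_mem (Finset.mem_univ x), Finset.card_univ]
    have h2 := Finset.pred_card_le_card_erase (s := Finset.univ.erase x) (a := y)
    omega
  obtain ⟨z, hz⟩ := hne
  simp only [Finset.mem_erase, Finset.mem_univ, and_true] at hz
  exact ⟨z, hz.2, hz.1⟩

set_option linter.unusedSectionVars false
section KeyProof

variable {n : ℕ} {X P : Type} [Fintype X] [Fintype P] [DecidableEq X] [DecidableEq P]
variable {f : X → (Fin n → P) → P}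

/-- `S` is decisive for `p` against `q`. -/
def Dec (f : X → (Fin n → P) → P) (p q : P) (S : Finset (Fin n)) : Prop :=
  ∀ x, f x (tup S p q) = p

/-- Master construction: if each individual's row hits all of `F` among the special
objects `T`, and there is room to cover `Fᶜ` by consensus outside `T`, then every
`r ∈ F` other than the filler `q₀` is an aggregate value at some special object. -/
lemma master
    (hdiag : ∀ (x : X) (p : P), f x (fun _ => p) = p)
    (hsurj : ∀ M : X → Fin n → P, (∀ i, Function.Surjective fun x => M x i) →
      Function.Surjective fun x => f x (M x))
    (T : Finset X) (M : X → Fin n → P) (F : Finset P) (q₀ : P)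
    (hcard : T.card + Fᶜ.card ≤ Fintype.card X)
    (hrow : ∀ i : Fin n, ∀ r ∈ F, ∃ x ∈ T, M x i = r)
    (r : P) (hr : r ∈ F) (hrq : r ≠ q₀) :
    ∃ x ∈ T, f x (M x) = r := by
  obtain ⟨g, hg1, hg2⟩ := exists_fill T Fᶜ q₀ hcard
  set M' : X → Fin n → P := fun x => if x ∈ T then M x else fun _ => g x with hM'
  have rows : ∀ i, Function.Surjective fun x => M' x i := by
    intro i r'
    by_cases h : r' ∈ F
    · obtain ⟨x, hxT, hx⟩ := hrow i r' h
      exact ⟨x, by simp [hM', hxT, hx]⟩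
    · obtain ⟨x, hxT, hx⟩ := hg1 r' (by simpa using h)
      exact ⟨x, by simp [hM', hxT, hx]⟩
  obtain ⟨x, hx⟩ := hsurj M' rows r
  simp only at hx
  by_cases hxT : x ∈ T
  · refine ⟨x, hxT, ?_⟩
    rw [hM'] at hx; simp only [if_pos hxT] at hx; exact hx
  · exfalso
    have hval : f x (M' x) = g x := by
      rw [hM']; simp only [if_neg hxT]; exact hdiag x (g x)
    rw [hval] at hx
    rcases hg2 x hxT with h | h
    · rw [hx] at h; simp [hr] at h
    · rw [hx] at h; exact hrq h

/-- Two special objects: the aggregate values at the pair of "mirror" objects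
cover `{p, q}`. -/
lemma pairs
    (hdiag : ∀ (x : X) (p : P), f x (fun _ => p) = p)
    (hsurj : ∀ M : X → Fin n → P, (∀ i, Function.Surjective fun x => M x i) →
      Function.Surjective fun x => f x (M x))
    (hρ : 2 ≤ Fintype.card P) (hm : Fintype.card P < Fintype.card X)
    {x y : X} (hxy : x ≠ y) {p q : P} (hpq : p ≠ q) (S : Finset (Fin n)) :
    (f x (tup S p q) = q ∨ f y (tup S q p) = q) ∧
      (f x (tup S p q) = p ∨ f y (tup S q p) = p) := by
  set M : X → Fin n → P := fun z => if z = x then tup S p q else tup S q p with hM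
  have hMx : M x = tup S p q := by simp [hM]
  have hMy : M y = tup S q p := by simp [hM, Ne.symm hxy]
  have hT : ({x, y} : Finset X).card = 2 := Finset.card_pair hxy
  have hF : ({p, q} : Finset P).card = 2 := Finset.card_pair hpq
  have hcard : ({x, y} : Finset X).card + (({p, q} : Finset P)ᶜ).card ≤ Fintype.card X := by
    rw [hT, Finset.card_compl, hF]; omega
  have hrow : ∀ i : Fin n, ∀ r ∈ ({p, q} : Finset P), ∃ z ∈ ({x, y} : Finset X), M z i = r := by
    intro i r hr
    rcases Finset.mem_insert.mp hr with h | h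
    · subst h
      by_cases hiS : i ∈ S
      · exact ⟨x, by simp, by rw [hMx]; exact tup_mem _ _ hiS⟩
      · exact ⟨y, by simp, by rw [hMy]; exact tup_notMem _ _ hiS⟩
    · rw [Finset.mem_singleton] at h; subst h
      by_cases hiS : i ∈ S
      · exact ⟨y, by simp, by rw [hMy]; exact tup_mem _ _ hiS⟩
      · exact ⟨x, by simp, by rw [hMx]; exact tup_notMem _ _ hiS⟩
  constructor
  · obtain ⟨z, hzT, hz⟩ :=
      master hdiag hsurj {x, y} M {p, q} p hcard hrow q (by simp) (Ne.symm hpq)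
    rcases Finset.mem_insert.mp hzT with h | h
    · subst h; left; rwa [hMx] at hz
    · rw [Finset.mem_singleton] at h; subst h; right; rwa [hMy] at hz
  · obtain ⟨z, hzT, hz⟩ :=
      master hdiag hsurj {x, y} M {p, q} q hcard hrow p (by simp) hpq
    rcases Finset.mem_insert.mp hzT with h | h
    · subst h; left; rwa [hMx] at hz
    · rw [Finset.mem_singleton] at h; subst h; right; rwa [hMy] at hz

/-- Two-valuedness of aggregates of two-valued tuples. -/
lemma twoval
    (hdiag : ∀ (x : X) (p : P), f x (fun _ => p) = p)
    (hsurj : ∀ M : X → Fin n → P, (∀ i, Function.Surjective fun x => M x i) →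
      Function.Surjective fun x => f x (M x))
    (hρ : 2 ≤ Fintype.card P) (hm : Fintype.card P < Fintype.card X)
    {p q : P} (hpq : p ≠ q) (S : Finset (Fin n)) (x : X) :
    f x (tup S p q) = p ∨ f x (tup S p q) = q := by
  have hX : 1 < Fintype.card X := by omega
  haveI : Nontrivial X := Fintype.one_lt_card_iff_nontrivial.mp hX
  obtain ⟨y, hy⟩ := exists_ne x
  obtain ⟨h1, h2⟩ := pairs hdiag hsurj hρ hm (Ne.symm hy) hpq S
  by_contra hc
  push_neg at hc
  rcases h1 with h | h
  · exact hc.2 h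
  · rcases h2 with h' | h'
    · exact hc.1 h'
    · rw [h] at h'; exact hpq h'.symm

/-- A single winning object makes the coalition decisive at every object. -/
lemma dec_of_single
    (hdiag : ∀ (x : X) (p : P), f x (fun _ => p) = p)
    (hsurj : ∀ M : X → Fin n → P, (∀ i, Function.Surjective fun x => M x i) →
      Function.Surjective fun x => f x (M x))
    (hρ : 2 ≤ Fintype.card P) (hm : Fintype.card P < Fintype.card X)
    {p q : P} (hpq : p ≠ q) {S : Finset (Fin n)} {x : X}
    (hx : f x (tup S p q) = p) : Dec f p q S := by
  intro y
  by_cases hxy : y = x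
  · subst hxy; exact hx
  · have h3 : 3 ≤ Fintype.card X := by omega
    obtain ⟨z, hzx, hzy⟩ := exists_third h3 x y
    have pxz := pairs hdiag hsurj hρ hm (Ne.symm hzx) hpq S
    have hzq : f z (tup S q p) = q := by
      rcases pxz.1 with h | h
      · rw [hx] at h; exact absurd h hpq
      · exact h
    have pyz := pairs hdiag hsurj hρ hm (Ne.symm hzy) hpq S
    rcases pyz.2 with h | h
    · exact h
    · rw [hzq] at h; exact absurd h.symm hpq

lemma dec_swap
    (hdiag : ∀ (x : X) (p : P), f x (fun _ => p) = p)
    (hsurj : ∀ M : X → Fin n → P, (∀ i, Function.Surjective fun x => M x i) →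
      Function.Surjective fun x => f x (M x))
    (hρ : 2 ≤ Fintype.card P) (hm : Fintype.card P < Fintype.card X)
    {p q : P} (hpq : p ≠ q) {S : Finset (Fin n)} (hS : Dec f p q S) :
    Dec f q p S := by
  haveI : Nontrivial X := Fintype.one_lt_card_iff_nontrivial.mp (by omega)
  obtain ⟨x⟩ : Nonempty X := inferInstance
  obtain ⟨y, hy⟩ := exists_ne x
  obtain ⟨h1, _⟩ := pairs hdiag hsurj hρ hm (Ne.symm hy) hpq S
  rcases h1 with h | h
  · rw [hS x] at h; exact absurd h hpq
  · exact dec_of_single hdiag hsurj hρ hm (Ne.symm hpq) h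

lemma not_dec
    (hdiag : ∀ (x : X) (p : P), f x (fun _ => p) = p)
    (hsurj : ∀ M : X → Fin n → P, (∀ i, Function.Surjective fun x => M x i) →
      Function.Surjective fun x => f x (M x))
    (hρ : 2 ≤ Fintype.card P) (hm : Fintype.card P < Fintype.card X)
    {p q : P} (hpq : p ≠ q) {S : Finset (Fin n)} (hS : ¬ Dec f p q S) :
    Dec f p q Sᶜ := by
  rw [Dec] at hS
  push_neg at hS
  obtain ⟨x, hx⟩ := hS
  have hq : f x (tup S p q) = q := by
    rcases twoval hdiag hsurj hρ hm hpq S x with h | h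
    · exact absurd h hx
    · exact h
  have hq' : f x (tup Sᶜ q p) = q := by rwa [tup_compl]
  exact dec_swap hdiag hsurj hρ hm (Ne.symm hpq)
    (dec_of_single hdiag hsurj hρ hm (Ne.symm hpq) hq')

lemma dec_univ
    (hdiag : ∀ (x : X) (p : P), f x (fun _ => p) = p) (p q : P) :
    Dec f p q Finset.univ := by
  intro x; rw [tup_univ]; exact hdiag x p

/-- Chain lemma: decisiveness for `(p,q)` propagates to `(q,q')` and `(q',p)`. -/
lemma dec_chain
    (hdiag : ∀ (x : X) (p : P), f x (fun _ => p) = p)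
    (hsurj : ∀ M : X → Fin n → P, (∀ i, Function.Surjective fun x => M x i) →
      Function.Surjective fun x => f x (M x))
    (hρ : 2 ≤ Fintype.card P) (hm : Fintype.card P < Fintype.card X)
    {p q q' : P} (h1 : p ≠ q) (h2 : q ≠ q') (h3 : p ≠ q')
    {S : Finset (Fin n)} (hS : Dec f p q S) :
    Dec f q q' S ∧ Dec f q' p S := by
  have hP3 : 3 ≤ Fintype.card P := by
    have hc : ({p, q, q'} : Finset P).card = 3 := by
      rw [Finset.card_insert_of_notMem (by simp [h1, h3]), Finset.card_pair h2]
    calc 3 = ({p, q, q'} : Finset P).card := hc.symm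
      _ ≤ Fintype.card P := Finset.card_le_univ _
  have hX3 : 3 ≤ Fintype.card X := by omega
  haveI : Nontrivial X := Fintype.one_lt_card_iff_nontrivial.mp (by omega)
  obtain ⟨x, y, hxy⟩ := Fintype.exists_pair_of_one_lt_card (show 1 < Fintype.card X by omega)
  obtain ⟨z, hzx, hzy⟩ := exists_third hX3 x y
  set M : X → Fin n → P := fun w =>
    if w = x then tup S p q else if w = y then tup S q' p else tup S q q' with hMdef
  have hMx : M x = tup S p q := by simp [hMdef]
  have hMy : M y = tup S q' p := by simp [hMdef, Ne.symm hxy]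
  have hMz : M z = tup S q q' := by simp [hMdef, hzx, hzy]
  have hTcard : ({x, y, z} : Finset X).card = 3 := by
    rw [Finset.card_insert_of_notMem (by simp [hxy, Ne.symm hzx]),
      Finset.card_pair (Ne.symm hzy)]
  have hFcard : ({p, q, q'} : Finset P).card = 3 := by
    rw [Finset.card_insert_of_notMem (by simp [h1, h3]), Finset.card_pair h2]
  have hcard : ({x, y, z} : Finset X).card + (({p, q, q'} : Finset P)ᶜ).card
      ≤ Fintype.card X := by
    rw [hTcard, Finset.card_compl, hFcard]; omega
  have hrow : ∀ i : Fin n, ∀ r ∈ ({p, q, q'} : Finset P),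
      ∃ w ∈ ({x, y, z} : Finset X), M w i = r := by
    intro i r hr
    by_cases hiS : i ∈ S
    · rcases Finset.mem_insert.mp hr with h | h
      · exact ⟨x, by simp, by rw [hMx, tup_mem _ _ hiS, h]⟩
      · rcases Finset.mem_insert.mp h with h' | h'
        · exact ⟨z, by simp, by rw [hMz, tup_mem _ _ hiS, h']⟩
        · rw [Finset.mem_singleton] at h'
          exact ⟨y, by simp, by rw [hMy, tup_mem _ _ hiS, h']⟩
    · rcases Finset.mem_insert.mp hr with h | h
      · exact ⟨y, by simp, by rw [hMy, tup_notMem _ _ hiS, h]⟩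
      · rcases Finset.mem_insert.mp h with h' | h'
        · exact ⟨x, by simp, by rw [hMx, tup_notMem _ _ hiS, h']⟩
        · rw [Finset.mem_singleton] at h'
          exact ⟨z, by simp, by rw [hMz, tup_notMem _ _ hiS, h']⟩
  have hqq' : Dec f q q' S := by
    obtain ⟨w, hwT, hw⟩ := master hdiag hsurj {x, y, z} M {p, q, q'} p hcard hrow q
      (by simp) (Ne.symm h1)
    rcases Finset.mem_insert.mp hwT with h | h
    · subst h; rw [hMx, hS w] at hw; exact absurd hw h1
    · rcases Finset.mem_insert.mp h with h' | h'
      · subst h'; rw [hMy] at hw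
        rcases twoval hdiag hsurj hρ hm (Ne.symm h3) S w with hv | hv
        · rw [hw] at hv; exact absurd hv h2
        · rw [hw] at hv; exact absurd hv.symm h1
      · rw [Finset.mem_singleton] at h'; subst h'; rw [hMz] at hw
        exact dec_of_single hdiag hsurj hρ hm h2 hw
  refine ⟨hqq', ?_⟩
  obtain ⟨w, hwT, hw⟩ := master hdiag hsurj {x, y, z} M {p, q, q'} p hcard hrow q'
    (by simp) (Ne.symm h3)
  rcases Finset.mem_insert.mp hwT with h | h
  · subst h; rw [hMx, hS w] at hw; exact absurd hw h3
  · rcases Finset.mem_insert.mp h with h' | h'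
    · subst h'; rw [hMy] at hw
      exact dec_of_single hdiag hsurj hρ hm (Ne.symm h3) hw
    · rw [Finset.mem_singleton] at h'; subst h'; rw [hMz, hqq' w] at hw
      exact absurd hw h2

lemma dec_snd
    (hdiag : ∀ (x : X) (p : P), f x (fun _ => p) = p)
    (hsurj : ∀ M : X → Fin n → P, (∀ i, Function.Surjective fun x => M x i) →
      Function.Surjective fun x => f x (M x))
    (hρ : 2 ≤ Fintype.card P) (hm : Fintype.card P < Fintype.card X)
    {p q : P} (hpq : p ≠ q) {S : Finset (Fin n)} (hS : Dec f p q S)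
    {q'' : P} (h2 : q'' ≠ p) : Dec f p q'' S := by
  by_cases hq : q'' = q
  · subst hq; exact hS
  · have := dec_chain hdiag hsurj hρ hm hpq (Ne.symm hq) (Ne.symm h2) hS
    exact dec_swap hdiag hsurj hρ hm h2 this.2

lemma dec_fst
    (hdiag : ∀ (x : X) (p : P), f x (fun _ => p) = p)
    (hsurj : ∀ M : X → Fin n → P, (∀ i, Function.Surjective fun x => M x i) →
      Function.Surjective fun x => f x (M x))
    (hρ : 2 ≤ Fintype.card P) (hm : Fintype.card P < Fintype.card X)
    {p q : P} (hpq : p ≠ q) {S : Finset (Fin n)} (hS : Dec f p q S)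
    {p'' : P} (h2 : p'' ≠ q) : Dec f p'' q S := by
  have h1 : Dec f q p S := dec_swap hdiag hsurj hρ hm hpq hS
  have h2' : Dec f q p'' S := dec_snd hdiag hsurj hρ hm (Ne.symm hpq) h1 h2
  exact dec_swap hdiag hsurj hρ hm (Ne.symm h2) h2'

/-- Decisiveness is independent of the pair of categories. -/
lemma dec_trans
    (hdiag : ∀ (x : X) (p : P), f x (fun _ => p) = p)
    (hsurj : ∀ M : X → Fin n → P, (∀ i, Function.Surjective fun x => M x i) →
      Function.Surjective fun x => f x (M x))
    (hρ : 2 ≤ Fintype.card P) (hm : Fintype.card P < Fintype.card X)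
    {p q p' q' : P} (h : p ≠ q) (h' : p' ≠ q')
    {S : Finset (Fin n)} (hS : Dec f p q S) : Dec f p' q' S := by
  by_cases hex : ∃ z : P, z ≠ p ∧ z ≠ p'
  · obtain ⟨z, hzp, hzp'⟩ := hex
    have s1 : Dec f p z S := dec_snd hdiag hsurj hρ hm h hS hzp
    have s2 : Dec f p' z S := dec_fst hdiag hsurj hρ hm (Ne.symm hzp) s1 (Ne.symm hzp')
    exact dec_snd hdiag hsurj hρ hm (Ne.symm hzp') s2 (Ne.symm h')
  · push_neg at hex
    have hq : q = p' := hex q (Ne.symm h)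
    have hq' : q' = p := by
      by_contra hc
      exact h' (hex q' hc).symm
    subst hq; subst hq'
    exact dec_swap hdiag hsurj hρ hm h hS

/-- Decisive coalitions are closed under intersection. -/
lemma dec_inter
    (hdiag : ∀ (x : X) (p : P), f x (fun _ => p) = p)
    (hsurj : ∀ M : X → Fin n → P, (∀ i, Function.Surjective fun x => M x i) →
      Function.Surjective fun x => f x (M x))
    (hρ : 2 ≤ Fintype.card P) (hm : Fintype.card P < Fintype.card X)
    {p q : P} (hpq : p ≠ q) {S₁ S₂ : Finset (Fin n)}
    (hd1 : Dec f p q S₁) (hd2 : Dec f p q S₂) : Dec f p q (S₁ ∩ S₂) := by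
  by_contra hc
  have hcompl : Dec f p q ((S₁ ∩ S₂)ᶜ) := not_dec hdiag hsurj hρ hm hpq hc
  have hz' : ∀ w, f w (tup (S₁ ∩ S₂) q p) = p := by
    intro w
    rw [← tup_compl (S₁ ∩ S₂) p q]
    exact hcompl w
  have hX3 : 3 ≤ Fintype.card X := by omega
  haveI : Nontrivial X := Fintype.one_lt_card_iff_nontrivial.mp (by omega)
  obtain ⟨x, y, hxy⟩ := Fintype.exists_pair_of_one_lt_card (show 1 < Fintype.card X by omega)
  obtain ⟨z, hzx, hzy⟩ := exists_third hX3 x y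
  set M : X → Fin n → P := fun w =>
    if w = x then tup S₁ p q else if w = y then tup S₂ p q else tup (S₁ ∩ S₂) q p with hMdef
  have hMx : M x = tup S₁ p q := by simp [hMdef]
  have hMy : M y = tup S₂ p q := by simp [hMdef, Ne.symm hxy]
  have hMz : M z = tup (S₁ ∩ S₂) q p := by simp [hMdef, hzx, hzy]
  have hTcard : ({x, y, z} : Finset X).card = 3 := by
    rw [Finset.card_insert_of_notMem (by simp [hxy, Ne.symm hzx]),
      Finset.card_pair (Ne.symm hzy)]
  have hFcard : ({p, q} : Finset P).card = 2 := Finset.card_pair hpq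
  have hcard : ({x, y, z} : Finset X).card + (({p, q} : Finset P)ᶜ).card
      ≤ Fintype.card X := by
    rw [hTcard, Finset.card_compl, hFcard]; omega
  have hrow : ∀ i : Fin n, ∀ r ∈ ({p, q} : Finset P),
      ∃ w ∈ ({x, y, z} : Finset X), M w i = r := by
    intro i r hr
    rcases Finset.mem_insert.mp hr with h | h
    · subst h
      by_cases h1 : i ∈ S₁
      · exact ⟨x, by simp, by rw [hMx, tup_mem _ _ h1]⟩
      · by_cases h2 : i ∈ S₂
        · exact ⟨y, by simp, by rw [hMy, tup_mem _ _ h2]⟩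
        · exact ⟨z, by simp, by rw [hMz, tup_notMem _ _ (by simp [h1, h2])]⟩
    · rw [Finset.mem_singleton] at h; subst h
      by_cases h1 : i ∈ S₁
      · by_cases h2 : i ∈ S₂
        · exact ⟨z, by simp, by rw [hMz, tup_mem _ _ (by simp [h1, h2])]⟩
        · exact ⟨y, by simp, by rw [hMy, tup_notMem _ _ h2]⟩
      · exact ⟨x, by simp, by rw [hMx, tup_notMem _ _ h1]⟩
  obtain ⟨w, hwT, hw⟩ := master hdiag hsurj {x, y, z} M {p, q} p hcard hrow q
    (by simp) (Ne.symm hpq)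
  rcases Finset.mem_insert.mp hwT with h | h
  · subst h; rw [hMx, hd1 w] at hw; exact hpq hw
  · rcases Finset.mem_insert.mp h with h' | h'
    · subst h'; rw [hMy, hd2 w] at hw; exact hpq hw
    · rw [Finset.mem_singleton] at h'; subst h'; rw [hMz, hz' w] at hw; exact hpq hw

/-- There is a single decisive individual for all pairs. -/
lemma exists_dec_singleton
    (hdiag : ∀ (x : X) (p : P), f x (fun _ => p) = p)
    (hsurj : ∀ M : X → Fin n → P, (∀ i, Function.Surjective fun x => M x i) →
      Function.Surjective fun x => f x (M x))
    (hρ : 2 ≤ Fintype.card P) (hm : Fintype.card P < Fintype.card X) :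
    ∃ d : Fin n, ∀ p q : P, p ≠ q → Dec f p q {d} := by
  classical
  haveI : Nonempty X := Fintype.card_pos_iff.mp (by omega)
  obtain ⟨x₀⟩ := (inferInstance : Nonempty X)
  obtain ⟨p₀, q₀, hpq⟩ := Fintype.exists_pair_of_one_lt_card
    (show 1 < Fintype.card P by omega)
  set s : Finset (Finset (Fin n)) := Finset.univ.filter (fun S => Dec f p₀ q₀ S) with hs
  have hsne : s.Nonempty := by
    refine ⟨Finset.univ, ?_⟩
    rw [hs, Finset.mem_filter]
    exact ⟨Finset.mem_univ _, dec_univ hdiag p₀ q₀⟩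
  obtain ⟨S₀, hS₀s, hmin⟩ := Finset.exists_min_image s Finset.card hsne
  have hS₀ : Dec f p₀ q₀ S₀ := (Finset.mem_filter.mp hS₀s).2
  have hne : S₀.Nonempty := by
    rcases Finset.eq_empty_or_nonempty S₀ with h | h
    · exfalso
      have := hS₀ x₀
      rw [h, tup_empty, hdiag] at this
      exact hpq this.symm
    · exact h
  obtain ⟨d, hd⟩ := hne
  have hsing : Dec f p₀ q₀ {d} := by
    by_contra hc
    have h1 : Dec f p₀ q₀ (({d} : Finset (Fin n))ᶜ) := not_dec hdiag hsurj hρ hm hpq hc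
    have h2 : Dec f p₀ q₀ (S₀ ∩ ({d} : Finset (Fin n))ᶜ) :=
      dec_inter hdiag hsurj hρ hm hpq hS₀ h1
    have heq : S₀ ∩ ({d} : Finset (Fin n))ᶜ = S₀.erase d := by
      ext i
      simp only [Finset.mem_inter, Finset.mem_compl, Finset.mem_singleton, Finset.mem_erase]
      tauto
    rw [heq] at h2
    have hmem : S₀.erase d ∈ s := by
      rw [hs, Finset.mem_filter]; exact ⟨Finset.mem_univ _, h2⟩
    have h3 := hmin _ hmem
    have h4 := Finset.card_erase_of_mem hd
    have hpos : 0 < S₀.card := Finset.card_pos.mpr ⟨d, hd⟩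
    omega
  exact ⟨d, fun p q h => dec_trans hdiag hsurj hρ hm hpq h hsing⟩

/-- Key abstract theorem: any unanimous pointwise rule preserving surjectivity is
a projection. -/
lemma key
    (hdiag : ∀ (x : X) (p : P), f x (fun _ => p) = p)
    (hsurj : ∀ M : X → Fin n → P, (∀ i, Function.Surjective fun x => M x i) →
      Function.Surjective fun x => f x (M x))
    (hρ : 2 ≤ Fintype.card P) (hm : Fintype.card P < Fintype.card X) :
    ∃ d : Fin n, ∀ (x : X) (t : Fin n → P), f x t = t d := by
  classical
  obtain ⟨d, hd⟩ := exists_dec_singleton hdiag hsurj hρ hm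
  refine ⟨d, fun x t => ?_⟩
  by_contra hne
  haveI : Nontrivial P := Fintype.one_lt_card_iff_nontrivial.mp (by omega)
  obtain ⟨q₁, hq₁⟩ := exists_ne (t d)
  obtain ⟨g, hg1, _⟩ := exists_fill ({x} : Finset X) Finset.univ (t d)
    (by rw [Finset.card_singleton, Finset.card_univ]; omega)
  obtain ⟨g', hg'1, hg'2⟩ := exists_fill ({x} : Finset X) (Finset.univ.erase (t d)) q₁
    (by rw [Finset.card_singleton, Finset.card_erase_of_mem (Finset.mem_univ _),
      Finset.card_univ]; omega)
  have hg'ne : ∀ z, z ≠ x → g' z ≠ t d := by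
    intro z hz
    rcases hg'2 z (by simp [hz]) with h | h
    · exact (Finset.mem_erase.mp h).1
    · rw [h]; exact hq₁
  set M : X → Fin n → P := fun z => if z = x then t else tup {d} (g' z) (g z) with hMdef
  have hMx : M x = t := by simp [hMdef]
  have hMz : ∀ z, z ≠ x → M z = tup {d} (g' z) (g z) := by
    intro z hz; simp [hMdef, hz]
  have rows : ∀ i, Function.Surjective fun z => M z i := by
    intro i r
    by_cases hid : i = d
    · by_cases hrp : r = t d
      · exact ⟨x, by show M x i = r; rw [hMx, hid, hrp]⟩
      · obtain ⟨z, hz, hgz⟩ := hg'1 r (by simp [hrp])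
        have hz' : z ≠ x := Finset.notMem_singleton.mp hz
        refine ⟨z, ?_⟩
        show M z i = r
        rw [hMz z hz', hid, tup_mem _ _ (Finset.mem_singleton_self d), hgz]
    · obtain ⟨z, hz, hgz⟩ := hg1 r (Finset.mem_univ r)
      have hz' : z ≠ x := Finset.notMem_singleton.mp hz
      refine ⟨z, ?_⟩
      show M z i = r
      rw [hMz z hz', tup_notMem _ _ (by simp [hid]), hgz]
  obtain ⟨z, hz⟩ := hsurj M rows (t d)
  simp only at hz
  by_cases hzx : z = x
  · subst hzx; rw [hMx] at hz; exact hne hz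
  · rw [hMz z hzx] at hz
    by_cases heq : g' z = g z
    · rw [heq, tup_self, hdiag] at hz
      exact hg'ne z hzx (heq.trans hz)
    · rw [hd (g' z) (g z) heq z] at hz
      exact hg'ne z hzx hz

end KeyProof

/-- **Corollary 1.** For `m > ρ ≥ 2`, every unanimous and independent CAF is a
dictatorship. -/
theorem unanimous_independent_dictatorship
    {n ρ m : ℕ} (hn : 2 ≤ n) (hρ : 2 ≤ ρ) (hm : ρ < m)
    (X P : Type) [Fintype X] [Fintype P]
    (hX : Fintype.card X = m) (hP : Fintype.card P = ρ)
    (α : Profile n X P → Classif X P)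
    (hU : Unanimous α) (hInd : Independent α) :
    Dictatorship α := by
  classical
  have hρ' : 2 ≤ Fintype.card P := by omega
  have hm' : Fintype.card P < Fintype.card X := by rw [hP, hX]; exact hm
  haveI : Nonempty P := Fintype.card_pos_iff.mp (by omega)
  obtain ⟨f, hbridge⟩ : ∃ f : X → (Fin n → P) → P,
      ∀ (c : Profile n X P) (x : X), (α c).1 x = f x (fun i => (c i).1 x) := by
    refine ⟨fun x t =>
      if h : ∃ c : Profile n X P, ∀ i, (c i).1 x = t i then (α h.choose).1 x
      else Classical.arbitrary P, fun c x => ?_⟩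
    have hex : ∃ c' : Profile n X P, ∀ i, (c' i).1 x = (fun i => (c i).1 x) i :=
      ⟨c, fun _ => rfl⟩
    simp only [dif_pos hex]
    exact hInd x c hex.choose (fun i => (hex.choose_spec i).symm)
  have hdiag : ∀ (x : X) (p : P), f x (fun _ => p) = p := by
    intro x p
    obtain ⟨g, hg1, _⟩ := exists_fill ({x} : Finset X) Finset.univ p
      (by rw [Finset.card_singleton, Finset.card_univ]; omega)
    set σ : X → P := Function.update g x p with hσ
    have hσx : σ x = p := Function.update_self x p g
    have hσsurj : Function.Surjective σ := by
      intro r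
      by_cases hrp : r = p
      · exact ⟨x, by rw [hσx, hrp]⟩
      · obtain ⟨z, hz, hgz⟩ := hg1 r (Finset.mem_univ r)
        have hz' : z ≠ x := Finset.notMem_singleton.mp hz
        refine ⟨z, ?_⟩
        rw [hσ, Function.update_of_ne hz', hgz]
    have hb := hbridge (fun _ => ⟨σ, hσsurj⟩) x
    rw [hU ⟨σ, hσsurj⟩] at hb
    change σ x = f x fun _ => σ x at hb
    rw [hσx] at hb
    exact hb.symm
  have hsurj : ∀ M : X → Fin n → P, (∀ i, Function.Surjective fun x => M x i) →
      Function.Surjective fun x => f x (M x) := by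
    intro M hM
    set c : Profile n X P := fun i => ⟨fun z => M z i, hM i⟩ with hc
    have heq : ∀ z, f z (M z) = (α c).1 z := by
      intro z
      rw [hbridge c z]
    intro r
    obtain ⟨z, hz⟩ := (α c).2 r
    refine ⟨z, ?_⟩
    show f z (M z) = r
    rw [heq z]
    exact hz
  obtain ⟨d, hkey⟩ := key hdiag hsurj hρ' hm'
  refine ⟨d, fun c => ?_⟩
  funext x
  rw [hbridge c x, hkey x]
end

section
/- (Maniquet–Mongin) For m ≥ ρ > 2, every classification aggregation function that is unanimous and independent is a dictatorship, i.e., there exists an individual d ∈ N such that α(c) = c_d for every profile c. -/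
set_option linter.unusedSectionVars false

namespace MMAux

variable {n : ℕ} {X P : Type} [Fintype X] [Fintype P] [DecidableEq X] [DecidableEq P]

/-- two-valued vector: `s` on `S`, `t` off `S`. -/
def vS (S : Finset (Fin n)) (s t : P) : Fin n → P := fun i => if i ∈ S then s else t

lemma vS_mem {S : Finset (Fin n)} {s t : P} {i : Fin n} (h : i ∈ S) : vS S s t i = s := if_pos h
lemma vS_not_mem {S : Finset (Fin n)} {s t : P} {i : Fin n} (h : i ∉ S) : vS S s t i = t := if_neg h

lemma vS_compl (S : Finset (Fin n)) (s t : P) : vS Sᶜ s t = vS S t s := by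
  funext i
  by_cases h : i ∈ S <;> simp [vS, h]

/-- An injection `P → X` sending `s` to a prescribed point. -/
lemma exists_iota1 (hXP : Fintype.card P ≤ Fintype.card X) (s : P) (x : X) :
    ∃ ι : P → X, Function.Injective ι ∧ ι s = x := by
  obtain ⟨e⟩ := Function.Embedding.nonempty_of_card_le hXP
  refine ⟨fun p => Equiv.swap (e s) x (e p), ?_, Equiv.swap_apply_left _ _⟩
  exact (Equiv.swap (e s) x).injective.comp e.injective

/-- An injection `P → X` with two prescribed values. -/
lemma exists_iota2 (hXP : Fintype.card P ≤ Fintype.card X) {s t : P} (hst : s ≠ t)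
    {x y : X} (hxy : x ≠ y) :
    ∃ ι : P → X, Function.Injective ι ∧ ι s = x ∧ ι t = y := by
  obtain ⟨e⟩ := Function.Embedding.nonempty_of_card_le hXP
  set τ₁ := Equiv.swap (e s) x with hτ₁
  have h1 : τ₁ (e s) = x := Equiv.swap_apply_left _ _
  have hax : τ₁ (e t) ≠ x := by
    rw [← h1]
    intro h
    exact hst (e.injective (τ₁.injective h)).symm
  set τ₂ := Equiv.swap (τ₁ (e t)) y with hτ₂
  refine ⟨fun p => τ₂ (τ₁ (e p)), ?_, ?_, Equiv.swap_apply_left _ _⟩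
  · exact τ₂.injective.comp (τ₁.injective.comp e.injective)
  · show τ₂ (τ₁ (e s)) = x
    rw [h1]
    exact Equiv.swap_apply_of_ne_of_ne (Ne.symm hax) hxy

/-- An injection `P → X` with three prescribed values. -/
lemma exists_iota3 (hXP : Fintype.card P ≤ Fintype.card X) {s t u : P}
    (hst : s ≠ t) (hsu : s ≠ u) (htu : t ≠ u)
    {x y z : X} (hxy : x ≠ y) (hxz : x ≠ z) (hyz : y ≠ z) :
    ∃ ι : P → X, Function.Injective ι ∧ ι s = x ∧ ι t = y ∧ ι u = z := by
  obtain ⟨ι₀, hι₀, hs, ht⟩ := exists_iota2 hXP hst hxy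
  have hux : ι₀ u ≠ x := by rw [← hs]; exact fun h => hsu (hι₀ h).symm
  have huy : ι₀ u ≠ y := by rw [← ht]; exact fun h => htu (hι₀ h).symm
  set τ := Equiv.swap (ι₀ u) z with hτ
  refine ⟨fun p => τ (ι₀ p), τ.injective.comp hι₀, ?_, ?_, Equiv.swap_apply_left _ _⟩
  · show τ (ι₀ s) = x
    rw [hs]; exact Equiv.swap_apply_of_ne_of_ne (Ne.symm hux) hxz
  · show τ (ι₀ t) = y
    rw [ht]; exact Equiv.swap_apply_of_ne_of_ne (Ne.symm huy) hyz

lemma exists_third {Y : Type} [Fintype Y] (h3 : 3 ≤ Fintype.card Y) (x y : Y) :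
    ∃ z, z ≠ x ∧ z ≠ y := by
  by_contra h
  push_neg at h
  classical
  have hsub : (Finset.univ : Finset Y) ⊆ {x, y} := by
    intro z _
    by_cases hz : z = x
    · simp [hz]
    · simp [h z hz]
  have hcard := Finset.card_le_card hsub
  have h2 : ({x, y} : Finset Y).card ≤ 2 := Finset.card_insert_le _ _ |>.trans (by simp)
  rw [Finset.card_univ] at hcard
  omega



/-- The abstract properties of the object-wise aggregation functions. -/
structure Good (f : X → (Fin n → P) → P) : Prop where
  unan : ∀ (x : X) (p : P), f x (fun _ => p) = p
  surj : ∀ w : X → Fin n → P, (∀ i, Function.Surjective fun x => w x i) →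
    Function.Surjective fun x => f x (w x)

variable {f : X → (Fin n → P) → P}

/-- Master lemma: place vectors `U p` at objects `ι p`; if the slices cover everything,
any category is realized as an output at one of these objects. -/
lemma cml (hf : Good f) (hP : Nontrivial P)
    {ι : P → X} (hι : Function.Injective ι) (U : P → Fin n → P)
    (hcov : ∀ i q, ∃ p, U p i = q) (q : P) :
    ∃ p, f (ι p) (U p) = q := by
  obtain ⟨p₀, hp₀⟩ := exists_ne q
  set w : X → Fin n → P := fun x => if h : ∃ p, ι p = x then U h.choose else fun _ => p₀
    with hwdef
  have hw : ∀ p, w (ι p) = U p := by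
    intro p
    have hex : ∃ p', ι p' = ι p := ⟨p, rfl⟩
    have hch : hex.choose = p := hι hex.choose_spec
    simp only [hwdef, dif_pos hex, hch]
  have hs : ∀ i, Function.Surjective fun x => w x i := by
    intro i q'
    obtain ⟨p, hp⟩ := hcov i q'
    exact ⟨ι p, by simp only [hw p]; exact hp⟩
  obtain ⟨x, hx⟩ := hf.surj w hs q
  by_cases h : ∃ p, ι p = x
  · refine ⟨h.choose, ?_⟩
    rw [← hw, h.choose_spec]
    exact hx
  · exfalso
    have hwx : w x = fun _ => p₀ := by simp only [hwdef, dif_neg h]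
    have hx' : f x (w x) = q := hx
    rw [hwx, hf.unan x p₀] at hx'
    exact hp₀ hx'



lemma latin3 (hf : Good f) (hP3 : 3 ≤ Fintype.card P) (hXP : Fintype.card P ≤ Fintype.card X)
    {x y z : X} (hxy : x ≠ y) (hxz : x ≠ z) (hyz : y ≠ z)
    {s t u : P} (hst : s ≠ t) (hsu : s ≠ u) (htu : t ≠ u)
    {v w o : Fin n → P}
    (hrow : ∀ i, (s = v i ∨ s = w i ∨ s = o i) ∧ (t = v i ∨ t = w i ∨ t = o i) ∧
      (u = v i ∨ u = w i ∨ u = o i)) :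
    ∀ q, (q = s ∨ q = t ∨ q = u) → (q = f x v ∨ q = f y w ∨ q = f z o) := by
  have hP : Nontrivial P := Fintype.one_lt_card_iff_nontrivial.mp (by omega)
  obtain ⟨ι, hι, hιs, hιt, hιu⟩ := exists_iota3 hXP hst hsu htu hxy hxz hyz
  set U : P → Fin n → P := fun p =>
    if p = s then v else if p = t then w else if p = u then o else fun _ => p with hUdef
  have Us : U s = v := by simp [hUdef]
  have Ut : U t = w := by simp [hUdef, Ne.symm hst]
  have Uu : U u = o := by simp [hUdef, Ne.symm hsu, Ne.symm htu]
  have Uother : ∀ p, p ≠ s → p ≠ t → p ≠ u → U p = fun _ => p := by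
    intro p h1 h2 h3; simp [hUdef, h1, h2, h3]
  have hcov : ∀ i q, ∃ p, U p i = q := by
    intro i q
    by_cases hqs : q = s
    · rcases (hrow i).1 with h | h | h
      · exact ⟨s, by rw [Us, hqs]; exact h.symm⟩
      · exact ⟨t, by rw [Ut, hqs]; exact h.symm⟩
      · exact ⟨u, by rw [Uu, hqs]; exact h.symm⟩
    by_cases hqt : q = t
    · rcases (hrow i).2.1 with h | h | h
      · exact ⟨s, by rw [Us, hqt]; exact h.symm⟩
      · exact ⟨t, by rw [Ut, hqt]; exact h.symm⟩
      · exact ⟨u, by rw [Uu, hqt]; exact h.symm⟩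
    by_cases hqu : q = u
    · rcases (hrow i).2.2 with h | h | h
      · exact ⟨s, by rw [Us, hqu]; exact h.symm⟩
      · exact ⟨t, by rw [Ut, hqu]; exact h.symm⟩
      · exact ⟨u, by rw [Uu, hqu]; exact h.symm⟩
    · exact ⟨q, by rw [Uother q hqs hqt hqu]⟩
  intro q hq
  obtain ⟨p, hp⟩ := cml hf hP hι U hcov q
  by_cases hps : p = s
  · subst hps; rw [Us, hιs] at hp; exact Or.inl hp.symm
  by_cases hpt : p = t
  · subst hpt; rw [Ut, hιt] at hp; exact Or.inr (Or.inl hp.symm)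
  by_cases hpu : p = u
  · subst hpu; rw [Uu, hιu] at hp; exact Or.inr (Or.inr hp.symm)
  · exfalso
    rw [Uother p hps hpt hpu, hf.unan] at hp
    subst hp
    rcases hq with h | h | h
    exacts [hps h, hpt h, hpu h]

lemma pair_swap (hf : Good f) (hP3 : 3 ≤ Fintype.card P) (hXP : Fintype.card P ≤ Fintype.card X)
    {x y : X} (hxy : x ≠ y) {s t : P} (hst : s ≠ t) (S : Finset (Fin n)) :
    (f x (vS S s t) = s ∧ f y (vS Sᶜ s t) = t) ∨
    (f x (vS S s t) = t ∧ f y (vS Sᶜ s t) = s) := by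
  have hP : Nontrivial P := Fintype.one_lt_card_iff_nontrivial.mp (by omega)
  obtain ⟨ι, hι, hιs, hιt⟩ := exists_iota2 hXP hst hxy
  set U : P → Fin n → P := fun p =>
    if p = s then vS S s t else if p = t then vS Sᶜ s t else fun _ => p with hUdef
  have Us : U s = vS S s t := by simp [hUdef]
  have Ut : U t = vS Sᶜ s t := by simp [hUdef, Ne.symm hst]
  have Uother : ∀ p, p ≠ s → p ≠ t → U p = fun _ => p := by
    intro p h1 h2; simp [hUdef, h1, h2]
  have hcov : ∀ i q, ∃ p, U p i = q := by
    intro i q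
    by_cases hqs : q = s
    · by_cases hi : i ∈ S
      · exact ⟨s, by rw [Us, hqs]; exact vS_mem hi⟩
      · exact ⟨t, by rw [Ut, hqs]; exact vS_mem (Finset.mem_compl.mpr hi)⟩
    by_cases hqt : q = t
    · by_cases hi : i ∈ S
      · exact ⟨t, by rw [Ut, hqt]; exact vS_not_mem (by simp [Finset.mem_compl, hi])⟩
      · exact ⟨s, by rw [Us, hqt]; exact vS_not_mem hi⟩
    · exact ⟨q, by rw [Uother q hqs hqt]⟩
  have hs' : f x (vS S s t) = s ∨ f y (vS Sᶜ s t) = s := by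
    obtain ⟨p, hp⟩ := cml hf hP hι U hcov s
    by_cases hps : p = s
    · subst hps; rw [Us, hιs] at hp; exact Or.inl hp
    by_cases hpt : p = t
    · subst hpt; rw [Ut, hιt] at hp; exact Or.inr hp
    · exfalso; rw [Uother p hps hpt, hf.unan] at hp; exact hps hp
  have ht' : f x (vS S s t) = t ∨ f y (vS Sᶜ s t) = t := by
    obtain ⟨p, hp⟩ := cml hf hP hι U hcov t
    by_cases hps : p = s
    · subst hps; rw [Us, hιs] at hp; exact Or.inl hp
    by_cases hpt : p = t
    · subst hpt; rw [Ut, hιt] at hp; exact Or.inr hp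
    · exfalso; rw [Uother p hps hpt, hf.unan] at hp; exact hpt hp
  rcases hs' with h1 | h1 <;> rcases ht' with h2 | h2
  · exact absurd (h1.symm.trans h2) hst
  · exact Or.inl ⟨h1, h2⟩
  · exact Or.inr ⟨h2, h1⟩
  · exact absurd (h1.symm.trans h2) hst

lemma ftwo (hf : Good f) (hP3 : 3 ≤ Fintype.card P) (hXP : Fintype.card P ≤ Fintype.card X)
    (x : X) {s t : P} (hst : s ≠ t) (S : Finset (Fin n)) :
    f x (vS S s t) = s ∨ f x (vS S s t) = t := by
  have hX3 : 3 ≤ Fintype.card X := le_trans hP3 hXP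
  obtain ⟨y, hyx, -⟩ := exists_third hX3 x x
  rcases pair_swap hf hP3 hXP (Ne.symm hyx) hst S with h | h
  · exact Or.inl h.1
  · exact Or.inr h.1

lemma Deq (hf : Good f) (hP3 : 3 ≤ Fintype.card P) (hXP : Fintype.card P ≤ Fintype.card X)
    {s t : P} (hst : s ≠ t) (S : Finset (Fin n)) (x y : X) :
    f x (vS S s t) = f y (vS S s t) := by
  by_cases hxy : x = y
  · rw [hxy]
  · have hX3 : 3 ≤ Fintype.card X := le_trans hP3 hXP
    obtain ⟨z, hzx, hzy⟩ := exists_third hX3 x y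
    rcases pair_swap hf hP3 hXP (Ne.symm hzx) hst S with h1 | h1 <;>
      rcases pair_swap hf hP3 hXP (Ne.symm hzy) hst S with h2 | h2
    · rw [h1.1, h2.1]
    · exact absurd (h1.2.symm.trans h2.2) (Ne.symm hst)
    · exact absurd (h1.2.symm.trans h2.2) hst
    · rw [h1.1, h2.1]

def DD (f : X → (Fin n → P) → P) (s t : P) (S : Finset (Fin n)) : Prop :=
  ∀ x, f x (vS S s t) = s

lemma DD_of (hf : Good f) (hP3 : 3 ≤ Fintype.card P) (hXP : Fintype.card P ≤ Fintype.card X)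
    {s t : P} (hst : s ≠ t) {S : Finset (Fin n)} {y : X} (h : f y (vS S s t) = s) :
    DD f s t S :=
  fun x => (Deq hf hP3 hXP hst S x y).trans h

lemma Dnot (hf : Good f) (hP3 : 3 ≤ Fintype.card P) (hXP : Fintype.card P ≤ Fintype.card X)
    {s t : P} (hst : s ≠ t) {S : Finset (Fin n)} (h : ¬ DD f s t S) :
    ∀ x, f x (vS S s t) = t := by
  intro x
  rcases ftwo hf hP3 hXP x hst S with h1 | h1
  · exact absurd (DD_of hf hP3 hXP hst h1) h
  · exact h1

lemma Dcompl (hf : Good f) (hP3 : 3 ≤ Fintype.card P) (hXP : Fintype.card P ≤ Fintype.card X)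
    {s t : P} (hst : s ≠ t) (S : Finset (Fin n)) : DD f s t Sᶜ ↔ ¬ DD f s t S := by
  have hX3 : 3 ≤ Fintype.card X := le_trans hP3 hXP
  have hne : Nonempty X := Fintype.card_pos_iff.mp (by omega)
  obtain ⟨x⟩ := hne
  obtain ⟨y, hyx, -⟩ := exists_third hX3 x x
  constructor
  · intro h hS
    rcases pair_swap hf hP3 hXP (Ne.symm hyx) hst S with h1 | h1
    · exact hst ((h y).symm.trans h1.2)
    · exact hst ((hS x).symm.trans h1.1)
  · intro h
    rcases pair_swap hf hP3 hXP (Ne.symm hyx) hst S with h1 | h1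
    · exact absurd (DD_of hf hP3 hXP hst h1.1) h
    · exact DD_of hf hP3 hXP hst h1.2

lemma Dsym (hf : Good f) (hP3 : 3 ≤ Fintype.card P) (hXP : Fintype.card P ≤ Fintype.card X)
    {s t : P} (hst : s ≠ t) (S : Finset (Fin n)) : DD f s t S ↔ DD f t s S := by
  have hne : Nonempty X := Fintype.card_pos_iff.mp (by omega)
  have h1 : DD f t s S ↔ ¬ DD f s t Sᶜ := by
    constructor
    · intro h hc
      obtain ⟨x⟩ := hne
      have h2 := hc x
      rw [vS_compl] at h2
      exact hst (h2.symm.trans (h x))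
    · intro h x
      have h2 := Dnot hf hP3 hXP hst (S := Sᶜ) h x
      rw [vS_compl] at h2
      exact h2
  rw [h1, Dcompl hf hP3 hXP hst S]
  exact not_not.symm

lemma Dtriple (hf : Good f) (hP3 : 3 ≤ Fintype.card P) (hXP : Fintype.card P ≤ Fintype.card X)
    {s t u : P} (hst : s ≠ t) (hsu : s ≠ u) (htu : t ≠ u) (S : Finset (Fin n)) :
    DD f s t S ↔ DD f t u S := by
  have hX3 : 3 ≤ Fintype.card X := le_trans hP3 hXP
  obtain ⟨x, y, z, hxy, hxz, hyz⟩ := Fintype.two_lt_card_iff.mp (show 2 < Fintype.card X by omega)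
  have hrow : ∀ i, (s = vS S s t i ∨ s = vS S t u i ∨ s = vS S u s i) ∧
      (t = vS S s t i ∨ t = vS S t u i ∨ t = vS S u s i) ∧
      (u = vS S s t i ∨ u = vS S t u i ∨ u = vS S u s i) := by
    intro i
    by_cases hi : i ∈ S
    · exact ⟨Or.inl (vS_mem hi).symm, Or.inr (Or.inl (vS_mem hi).symm),
        Or.inr (Or.inr (vS_mem hi).symm)⟩
    · exact ⟨Or.inr (Or.inr (vS_not_mem hi).symm), Or.inl (vS_not_mem hi).symm,
        Or.inr (Or.inl (vS_not_mem hi).symm)⟩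
  have L := latin3 hf hP3 hXP hxy hxz hyz hst hsu htu hrow
  constructor
  · intro h
    have hfx : f x (vS S s t) = s := h x
    have hyw : f y (vS S t u) = t := by
      rcases L t (Or.inr (Or.inl rfl)) with h1 | h1 | h1
      · exact absurd (h1.trans hfx) (Ne.symm hst)
      · exact h1.symm
      · rcases ftwo hf hP3 hXP z (Ne.symm hsu) S with h2 | h2
        · exact absurd (h1.trans h2) htu
        · exact absurd (h1.trans h2) (Ne.symm hst)
    exact DD_of hf hP3 hXP htu hyw
  · intro h
    by_contra hn
    have hvt := Dnot hf hP3 hXP hst hn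
    have hzo : f z (vS S u s) = s := by
      rcases L s (Or.inl rfl) with h1 | h1 | h1
      · exact absurd (h1.trans (hvt x)) hst
      · exact absurd (h1.trans (h y)) hst
      · exact h1.symm
    rcases L u (Or.inr (Or.inr rfl)) with h1 | h1 | h1
    · exact absurd (h1.trans (hvt x)) (Ne.symm htu)
    · exact absurd (h1.trans (h y)) (Ne.symm htu)
    · exact absurd (h1.trans hzo) (Ne.symm hsu)

lemma Dpair_eq (hf : Good f) (hP3 : 3 ≤ Fintype.card P) (hXP : Fintype.card P ≤ Fintype.card X)
    {s t s' t' : P} (hst : s ≠ t) (hst' : s' ≠ t') (S : Finset (Fin n)) :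
    DD f s t S ↔ DD f s' t' S := by
  have M1 : ∀ a b c : P, a ≠ b → a ≠ c → b ≠ c → (DD f a b S ↔ DD f a c S) := by
    intro a b c hab hac hbc
    rw [Dsym hf hP3 hXP hab S]
    exact Dtriple hf hP3 hXP (Ne.symm hab) hbc hac S
  have M2 : ∀ a b c : P, a ≠ b → c ≠ b → a ≠ c → (DD f a b S ↔ DD f c b S) := by
    intro a b c hab hcb hac
    rw [Dsym hf hP3 hXP hab S, Dsym hf hP3 hXP hcb S]
    exact M1 b a c (Ne.symm hab) (Ne.symm hcb) hac
  by_cases h1 : s = s'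
  · subst h1
    by_cases h2 : t = t'
    · subst h2; exact Iff.rfl
    · exact M1 s t t' hst hst' h2
  · by_cases h2 : t = t'
    · subst h2; exact M2 s t s' hst hst' h1
    · by_cases h3 : s = t'
      · subst h3
        by_cases h4 : t = s'
        · subst h4; exact Dsym hf hP3 hXP hst S
        · calc DD f s t S ↔ DD f s' t S := M2 s t s' hst (fun h => h4 h.symm) h1
            _ ↔ DD f s' s S :=
              M1 s' t s (fun h => h4 h.symm) (fun h => h1 h.symm) (Ne.symm hst)
      · by_cases h4 : t = s'
        · subst h4
          calc DD f s t S ↔ DD f t s S := Dsym hf hP3 hXP hst S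
            _ ↔ DD f t t' S := M1 t s t' (Ne.symm hst) hst' h3
        · calc DD f s t S ↔ DD f s t' S := M1 s t t' hst h3 h2
            _ ↔ DD f s' t' S := M2 s t' s' h3 hst' h1

lemma Lplus (hf : Good f) (hP3 : 3 ≤ Fintype.card P) (hXP : Fintype.card P ≤ Fintype.card X)
    {a b c : P} (hab : a ≠ b) (hac : a ≠ c) (hbc : b ≠ c)
    {o : Fin n → P} (ho : ∀ i, o i = a ∨ o i = b ∨ o i = c) {x : X} (hfa : f x o = a) :
    DD f c a (Finset.univ.filter fun i => o i = a) := by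
  have hX3 : 3 ≤ Fintype.card X := le_trans hP3 hXP
  obtain ⟨y, hyx, -⟩ := exists_third hX3 x x
  obtain ⟨z, hzx, hzy⟩ := exists_third hX3 x y
  set A := Finset.univ.filter (fun i => o i = a) with hA
  set B := Finset.univ.filter (fun i => o i = b) with hB
  have hmemA : ∀ i, i ∈ A ↔ o i = a := by intro i; simp [hA]
  have hmemB : ∀ i, i ∈ B ↔ o i = b := by intro i; simp [hB]
  have hrow : ∀ i, (a = o i ∨ a = vS A c a i ∨ a = vS B c b i) ∧
      (b = o i ∨ b = vS A c a i ∨ b = vS B c b i) ∧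
      (c = o i ∨ c = vS A c a i ∨ c = vS B c b i) := by
    intro i
    rcases ho i with h | h | h
    · have hiA : i ∈ A := (hmemA i).mpr h
      have hiB : i ∉ B := fun hc' => hab (h.symm.trans ((hmemB i).mp hc'))
      exact ⟨Or.inl h.symm, Or.inr (Or.inr (vS_not_mem hiB).symm),
        Or.inr (Or.inl (vS_mem hiA).symm)⟩
    · have hiA : i ∉ A := fun hc' => hab (((hmemA i).mp hc').symm.trans h)
      have hiB : i ∈ B := (hmemB i).mpr h
      exact ⟨Or.inr (Or.inl (vS_not_mem hiA).symm), Or.inl h.symm,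
        Or.inr (Or.inr (vS_mem hiB).symm)⟩
    · have hiA : i ∉ A := fun hc' => hac (((hmemA i).mp hc').symm.trans h)
      have hiB : i ∉ B := fun hc' => hbc (((hmemB i).mp hc').symm.trans h)
      exact ⟨Or.inr (Or.inl (vS_not_mem hiA).symm), Or.inr (Or.inr (vS_not_mem hiB).symm),
        Or.inl h.symm⟩
  have L := latin3 hf hP3 hXP (Ne.symm hyx) (Ne.symm hzx) (Ne.symm hzy) hab hac hbc hrow
  have hzr : f z (vS B c b) = b := by
    rcases L b (Or.inr (Or.inl rfl)) with h1 | h1 | h1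
    · exact absurd (h1.trans hfa) (Ne.symm hab)
    · rcases ftwo hf hP3 hXP y (Ne.symm hac) A with h2 | h2
      · exact absurd (h1.trans h2) hbc
      · exact absurd (h1.trans h2) (Ne.symm hab)
    · exact h1.symm
  have hyw : f y (vS A c a) = c := by
    rcases L c (Or.inr (Or.inr rfl)) with h1 | h1 | h1
    · exact absurd (h1.trans hfa) (Ne.symm hac)
    · exact h1.symm
    · exact absurd (h1.trans hzr) (Ne.symm hbc)
  exact DD_of hf hP3 hXP (Ne.symm hac) hyw

lemma Dsuper (hf : Good f) (hP3 : 3 ≤ Fintype.card P) (hXP : Fintype.card P ≤ Fintype.card X)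
    {s₀ t₀ : P} (h₀ : s₀ ≠ t₀) {S T : Finset (Fin n)} (hST : S ⊆ T)
    (h : DD f s₀ t₀ S) : DD f s₀ t₀ T := by
  obtain ⟨s, t, u, hst, hsu, htu⟩ := Fintype.two_lt_card_iff.mp (show 2 < Fintype.card P by omega)
  have hX3 : 3 ≤ Fintype.card X := le_trans hP3 hXP
  obtain ⟨x, y, z, hxy, hxz, hyz⟩ := Fintype.two_lt_card_iff.mp (show 2 < Fintype.card X by omega)
  have hS : DD f s u S := (Dpair_eq hf hP3 hXP hsu h₀ S).mpr h
  set o : Fin n → P := fun i => if i ∈ S then u else if i ∈ T then s else t with hodef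
  have hrow : ∀ i, (s = vS S s u i ∨ s = vS T t s i ∨ s = o i) ∧
      (t = vS S s u i ∨ t = vS T t s i ∨ t = o i) ∧
      (u = vS S s u i ∨ u = vS T t s i ∨ u = o i) := by
    intro i
    by_cases hiS : i ∈ S
    · have hiT : i ∈ T := hST hiS
      exact ⟨Or.inl (vS_mem hiS).symm, Or.inr (Or.inl (vS_mem hiT).symm),
        Or.inr (Or.inr (by simp [hodef, hiS]))⟩
    · by_cases hiT : i ∈ T
      · exact ⟨Or.inr (Or.inr (by simp [hodef, hiS, hiT])),
          Or.inr (Or.inl (vS_mem hiT).symm), Or.inl (vS_not_mem hiS).symm⟩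
      · exact ⟨Or.inr (Or.inl (vS_not_mem hiT).symm),
          Or.inr (Or.inr (by simp [hodef, hiS, hiT])), Or.inl (vS_not_mem hiS).symm⟩
  have L := latin3 hf hP3 hXP hxy hxz hyz hst hsu htu hrow
  have hfx : f x (vS S s u) = s := hS x
  have hyw : f y (vS T t s) = t := by
    by_contra hne
    have h2 : f y (vS T t s) = s := by
      rcases ftwo hf hP3 hXP y (Ne.symm hst) T with h2 | h2
      · exact absurd h2 hne
      · exact h2
    have hzt : f z o = t := by
      rcases L t (Or.inr (Or.inl rfl)) with h1 | h1 | h1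
      · exact absurd (h1.trans hfx) (Ne.symm hst)
      · exact absurd (h1.trans h2) (Ne.symm hst)
      · exact h1.symm
    rcases L u (Or.inr (Or.inr rfl)) with h1 | h1 | h1
    · exact absurd (h1.trans hfx) (Ne.symm hsu)
    · exact absurd (h1.trans h2) (Ne.symm hsu)
    · exact absurd (h1.trans hzt) (Ne.symm htu)
  have hT : DD f t s T := DD_of hf hP3 hXP (Ne.symm hst) hyw
  exact (Dpair_eq hf hP3 hXP (Ne.symm hst) h₀ T).mp hT

lemma Dprime (hf : Good f) (hP3 : 3 ≤ Fintype.card P) (hXP : Fintype.card P ≤ Fintype.card X)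
    {s₀ t₀ : P} (h₀ : s₀ ≠ t₀) {A B : Finset (Fin n)}
    (h : DD f s₀ t₀ (A ∪ B)) : DD f s₀ t₀ A ∨ DD f s₀ t₀ B := by
  obtain ⟨s, t, u, hst, hsu, htu⟩ := Fintype.two_lt_card_iff.mp (show 2 < Fintype.card P by omega)
  have hX3 : 3 ≤ Fintype.card X := le_trans hP3 hXP
  obtain ⟨x, y, z, hxy, hxz, hyz⟩ := Fintype.two_lt_card_iff.mp (show 2 < Fintype.card X by omega)
  set W := A ∪ B with hWdef
  set B' := B \ A with hB'
  have hW : DD f s u W := (Dpair_eq hf hP3 hXP hsu h₀ W).mpr h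
  set o : Fin n → P := fun i => if i ∈ A then u else if i ∈ B' then t else s with hodef
  have hrow : ∀ i, (s = vS W s u i ∨ s = vS B' u t i ∨ s = o i) ∧
      (t = vS W s u i ∨ t = vS B' u t i ∨ t = o i) ∧
      (u = vS W s u i ∨ u = vS B' u t i ∨ u = o i) := by
    intro i
    by_cases hiA : i ∈ A
    · have hiW : i ∈ W := Finset.mem_union_left _ hiA
      have hiB' : i ∉ B' := by simp [hB', hiA]
      exact ⟨Or.inl (vS_mem hiW).symm, Or.inr (Or.inl (vS_not_mem hiB').symm),
        Or.inr (Or.inr (by simp [hodef, hiA]))⟩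
    · by_cases hiB : i ∈ B
      · have hiW : i ∈ W := Finset.mem_union_right _ hiB
        have hiB' : i ∈ B' := by simp [hB', hiA, hiB]
        exact ⟨Or.inl (vS_mem hiW).symm, Or.inr (Or.inr (by simp [hodef, hiA, hiB'])),
          Or.inr (Or.inl (vS_mem hiB').symm)⟩
      · have hiW : i ∉ W := by simp [hWdef, hiA, hiB]
        have hiB' : i ∉ B' := by simp [hB', hiB]
        exact ⟨Or.inr (Or.inr (by simp [hodef, hiA, hiB'])),
          Or.inr (Or.inl (vS_not_mem hiB').symm), Or.inl (vS_not_mem hiW).symm⟩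
  have L := latin3 hf hP3 hXP hxy hxz hyz hst hsu htu hrow
  have hfx : f x (vS W s u) = s := hW x
  rcases ftwo hf hP3 hXP y (Ne.symm htu) B' with h2 | h2
  · have hBdec : DD f u t B' := DD_of hf hP3 hXP (Ne.symm htu) h2
    have hB0 : DD f s₀ t₀ B' := (Dpair_eq hf hP3 hXP (Ne.symm htu) h₀ B').mp hBdec
    exact Or.inr (Dsuper hf hP3 hXP h₀ Finset.sdiff_subset hB0)
  · have hzo : f z o = u := by
      rcases L u (Or.inr (Or.inr rfl)) with h1 | h1 | h1
      · exact absurd (h1.trans hfx) (Ne.symm hsu)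
      · exact absurd (h1.trans h2) (Ne.symm htu)
      · exact h1.symm
    have ho3 : ∀ i, o i = u ∨ o i = t ∨ o i = s := by
      intro i
      simp only [hodef]
      by_cases hiA : i ∈ A
      · simp [hiA]
      · by_cases hiB' : i ∈ B'
        · simp [hiA, hiB']
        · simp [hiA, hiB']
    have hLp := Lplus hf hP3 hXP (Ne.symm htu) (Ne.symm hsu) (Ne.symm hst) ho3 hzo
    have hAeq : (Finset.univ.filter fun i => o i = u) = A := by
      ext i
      simp only [Finset.mem_filter, Finset.mem_univ, true_and, hodef]
      by_cases hiA : i ∈ A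
      · simp [hiA]
      · by_cases hiB' : i ∈ B'
        · simp [hiA, hiB', htu]
        · simp [hiA, hiB', hsu]
    rw [hAeq] at hLp
    exact Or.inl ((Dpair_eq hf hP3 hXP hsu h₀ A).mp hLp)

lemma exists_dict (hf : Good f) (hP3 : 3 ≤ Fintype.card P) (hXP : Fintype.card P ≤ Fintype.card X)
    {s₀ t₀ : P} (h₀ : s₀ ≠ t₀) :
    ∃ d : Fin n, ∀ S : Finset (Fin n), DD f s₀ t₀ S ↔ d ∈ S := by
  have hUniv : DD f s₀ t₀ Finset.univ := by
    intro x
    have hv : vS (Finset.univ : Finset (Fin n)) s₀ t₀ = fun _ => s₀ :=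
      funext fun i => if_pos (Finset.mem_univ i)
    rw [hv, hf.unan]
  have hEmpty : ¬ DD f s₀ t₀ (∅ : Finset (Fin n)) := by
    have h := Dcompl hf hP3 hXP h₀ (∅ : Finset (Fin n))
    rw [Finset.compl_empty] at h
    exact h.mp hUniv
  have key : ∀ T : Finset (Fin n), DD f s₀ t₀ T → ∃ d ∈ T, DD f s₀ t₀ {d} := by
    intro T
    induction T using Finset.induction_on with
    | empty => intro h; exact absurd h hEmpty
    | @insert a T ha IH =>
      intro h
      rw [Finset.insert_eq] at h
      rcases Dprime hf hP3 hXP h₀ h with h1 | h2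
      · exact ⟨a, Finset.mem_insert_self a T, h1⟩
      · obtain ⟨d, hd, hdd⟩ := IH h2
        exact ⟨d, Finset.mem_insert_of_mem hd, hdd⟩
  obtain ⟨d, -, hd⟩ := key Finset.univ hUniv
  refine ⟨d, fun S => ⟨fun hS => ?_, fun hdS =>
    Dsuper hf hP3 hXP h₀ (Finset.singleton_subset_iff.mpr hdS) hd⟩⟩
  by_contra hdS
  have hsub : S ⊆ ({d} : Finset (Fin n))ᶜ := by
    intro i hi
    rw [Finset.mem_compl, Finset.mem_singleton]
    rintro rfl
    exact hdS hi
  have hcd := Dsuper hf hP3 hXP h₀ hsub hS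
  exact (Dcompl hf hP3 hXP h₀ {d}).mp hcd hd

lemma proj2 (hf : Good f) (hP3 : 3 ≤ Fintype.card P) (hXP : Fintype.card P ≤ Fintype.card X)
    {s₀ t₀ : P} (h₀ : s₀ ≠ t₀) {d : Fin n}
    (hd : ∀ S : Finset (Fin n), DD f s₀ t₀ S ↔ d ∈ S) (x : X) {v : Fin n → P} {s t : P}
    (hst : s ≠ t) (hv : ∀ i, v i = s ∨ v i = t) : f x v = v d := by
  set S := Finset.univ.filter (fun i => v i = s) with hS
  have hmem : ∀ i, i ∈ S ↔ v i = s := by intro i; simp [hS]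
  have hveq : v = vS S s t := by
    funext i
    by_cases h : v i = s
    · rw [vS_mem ((hmem i).mpr h)]; exact h
    · rw [vS_not_mem (fun hc => h ((hmem i).mp hc))]
      rcases hv i with h1 | h1
      · exact absurd h1 h
      · exact h1
  by_cases hdS : d ∈ S
  · have hDD : DD f s t S := (Dpair_eq hf hP3 hXP hst h₀ S).mpr ((hd S).mpr hdS)
    rw [hveq]
    exact (hDD x).trans (vS_mem hdS).symm
  · have hnDD : ¬ DD f s t S := fun hc =>
      hdS ((hd S).mp ((Dpair_eq hf hP3 hXP hst h₀ S).mp hc))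
    rw [hveq]
    exact (Dnot hf hP3 hXP hst hnDD x).trans (vS_not_mem hdS).symm

lemma proj_all (hf : Good f) (hP3 : 3 ≤ Fintype.card P) (hXP : Fintype.card P ≤ Fintype.card X)
    {s₀ t₀ : P} (h₀ : s₀ ≠ t₀) {d : Fin n}
    (hd : ∀ S : Finset (Fin n), DD f s₀ t₀ S ↔ d ∈ S) (x : X) (v : Fin n → P) :
    f x v = v d := by
  have hP : Nontrivial P := Fintype.one_lt_card_iff_nontrivial.mp (by omega)
  obtain ⟨ι, hι, hιx⟩ := exists_iota1 hXP (v d) x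
  set U : P → Fin n → P :=
    fun p => if p = v d then v else fun i => if v i = p then v d else p with hUdef
  have Uvd : U (v d) = v := by simp [hUdef]
  have Uo : ∀ p, p ≠ v d → U p = fun i => if v i = p then v d else p := by
    intro p hp; simp [hUdef, hp]
  have hcov : ∀ i q, ∃ p, U p i = q := by
    intro i q
    by_cases hq : q = v d
    · by_cases hi : v i = v d
      · exact ⟨v d, by rw [Uvd, hi, hq]⟩
      · refine ⟨v i, ?_⟩
        rw [Uo (v i) hi]
        show (if v i = v i then v d else v i) = q
        rw [if_pos rfl]; exact hq.symm
    · by_cases hi : v i = q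
      · exact ⟨v d, by rw [Uvd]; exact hi⟩
      · refine ⟨q, ?_⟩
        rw [Uo q hq]
        show (if v i = q then v d else q) = q
        rw [if_neg hi]
  obtain ⟨p, hp⟩ := cml hf hP hι U hcov (v d)
  by_cases hpv : p = v d
  · rw [hpv, Uvd, hιx] at hp
    exact hp
  · exfalso
    have h2 : f (ι p) (U p) = U p d := by
      apply proj2 hf hP3 hXP h₀ hd (ι p) (s := v d) (t := p) (fun h => hpv h.symm)
      intro i
      rw [Uo p hpv]
      show (if v i = p then v d else p) = v d ∨ (if v i = p then v d else p) = p
      by_cases hi : v i = p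
      · rw [if_pos hi]; exact Or.inl rfl
      · rw [if_neg hi]; exact Or.inr rfl
    rw [hp] at h2
    have h3 : U p d = p := by
      rw [Uo p hpv]
      show (if v d = p then v d else p) = p
      rw [if_neg (fun h => hpv h.symm)]
    rw [h3] at h2
    exact hpv h2.symm

theorem abstract_dict (hP3 : 3 ≤ Fintype.card P) (hXP : Fintype.card P ≤ Fintype.card X)
    (hf : Good f) : ∃ d : Fin n, ∀ (x : X) (v : Fin n → P), f x v = v d := by
  obtain ⟨s₀, t₀, h₀⟩ := Fintype.one_lt_card_iff.mp (show 1 < Fintype.card P by omega)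
  obtain ⟨d, hd⟩ := exists_dict hf hP3 hXP h₀
  exact ⟨d, fun x v => proj_all hf hP3 hXP h₀ hd x v⟩

end MMAux


/-- **Maniquet–Mongin.** For `m ≥ ρ > 2`, every unanimous and independent CAF is a
dictatorship. -/
theorem maniquet_mongin
    {n ρ m : ℕ} (hn : 2 ≤ n) (hρ : 2 < ρ) (hm : ρ ≤ m)
    (X P : Type) [Fintype X] [Fintype P]
    (hX : Fintype.card X = m) (hP : Fintype.card P = ρ)
    (α : Profile n X P → Classif X P)
    (hU : Unanimous α) (hInd : Independent α) :
    Dictatorship α := by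
  classical
  have hP3 : 3 ≤ Fintype.card P := by rw [hP]; omega
  have hXP : Fintype.card P ≤ Fintype.card X := by rw [hX, hP]; exact hm
  have hmk : ∀ (x : X) (p : P), ∃ c : Classif X P, c.1 x = p := by
    intro x p
    obtain ⟨ι, hι, hιp⟩ := MMAux.exists_iota1 hXP p x
    refine ⟨⟨fun z => if h : ∃ q, ι q = z then h.choose else p, ?_⟩, ?_⟩
    · intro q
      refine ⟨ι q, ?_⟩
      have hex : ∃ q', ι q' = ι q := ⟨q, rfl⟩
      simp only [dif_pos hex]
      exact hι hex.choose_spec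
    · show (if h : ∃ q, ι q = x then h.choose else p) = p
      have hex : ∃ q, ι q = x := ⟨p, hιp⟩
      simp only [dif_pos hex]
      exact hι (hex.choose_spec.trans hιp.symm)
  choose sur hsur using hmk
  set F : X → (Fin n → P) → P := fun x v => (α fun i => sur x (v i)).1 x with hF
  have key : ∀ (c : Profile n X P) (x : X), (α c).1 x = F x fun i => (c i).1 x := by
    intro c x
    exact hInd x c _ fun i => (hsur x ((c i).1 x)).symm
  have hgood : MMAux.Good F := by
    constructor
    · intro x p
      have h1 : F x (fun _ => p) = (α fun _ => sur x p).1 x := rfl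
      rw [h1, hU (sur x p)]
      exact hsur x p
    · intro w hw q
      obtain ⟨x, hx⟩ := (α fun i => (⟨fun x => w x i, hw i⟩ : Classif X P)).2 q
      refine ⟨x, ?_⟩
      have h1 := key (fun i => (⟨fun x => w x i, hw i⟩ : Classif X P)) x
      exact h1.symm.trans hx
  obtain ⟨d, hproj⟩ := MMAux.abstract_dict hP3 hXP hgood
  refine ⟨d, fun c => ?_⟩
  funext x
  exact (key c x).trans (hproj x _)
end

section
/- Let X = {x, y} and P = {p, q}, and let α_x : P^N → P be any unanimous elementary CAF (i.e., α_x(p,...,p) = p and α_x(q,...,q) = q). Then an elementary CAF α_y : P^N → P is such that the pair (α_x, α_y) defines a unanimous and independent classification aggregation function (assigning to each profile c the map sending x to α_x((c_i(x))_i) and y to α_y((c_i(y))_i), which must be surjective onto P for every profile) if and only if α_y(r) = ¬α_x(¬r) for all r ∈ P^N, where ¬ swaps p and q and ¬r = (¬r_1, ..., ¬r_n). -/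
/-! With two objects and two categories, a classification is determined by the category of
`x`: the category of `y` is the other one, `swap p q` of it. Hence the pair `(αx, αy)` yields a
classification on every profile exactly when `αy (c · y) = swap p q (αx (c · x))`, and since
`c i y = swap p q (c i x)` this is the relation `αy r = ¬ αx (¬ r)`. Unanimity and independence
then come for free: the aggregate is computed object by object, and `αy` inherits unanimity
from `αx` through the relation. -/

open Equiv Function

lemma eq_or_eq_of_card_eq_two {α : Type*} [Fintype α] (h : Fintype.card α = 2) {a b : α}
    (hab : a ≠ b) (c : α) : c = a ∨ c = b := by
  classical
  have huniv : ({a, b} : Finset α) = Finset.univ :=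
    Finset.eq_univ_of_card _ (by rw [Finset.card_pair hab, h])
  simpa [← huniv] using Finset.mem_univ c

section TwoElements

variable {P : Type} [Fintype P] [DecidableEq P] (hP : Fintype.card P = 2) {p q : P} (hpq : p ≠ q)
include hP hpq

lemma swap_apply_ne_self_of_card_eq_two (a : P) : swap p q a ≠ a :=
  swap_apply_ne_self_iff.mpr ⟨hpq, eq_or_eq_of_card_eq_two hP hpq a⟩

lemma swap_apply_eq_of_ne {a b : P} (hab : a ≠ b) : swap p q a = b :=
  (eq_or_eq_of_card_eq_two hP hab _).resolve_left (swap_apply_ne_self_of_card_eq_two hP hpq a)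

end TwoElements

lemma surjective_ite_of_card_eq_two {X P : Type} [DecidableEq X] [Fintype P]
    (hP : Fintype.card P = 2) {x y : X} (hxy : x ≠ y) {a b : P} (hab : a ≠ b) :
    Surjective fun z : X => if z = x then a else b := by
  intro t
  rcases eq_or_eq_of_card_eq_two hP hab t with rfl | rfl
  · exact ⟨x, if_pos rfl⟩
  · exact ⟨y, if_neg hxy.symm⟩

namespace Classif

variable {X P : Type} [Fintype X] (hX : Fintype.card X = 2) {x y : X} (hxy : x ≠ y)
include hX hxy

lemma apply_ne [Nontrivial P] (c : Classif X P) : c.1 x ≠ c.1 y := by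
  intro hcxy
  obtain ⟨a, b, hab⟩ := exists_pair_ne P
  obtain ⟨za, rfl⟩ := c.2 a
  obtain ⟨zb, rfl⟩ := c.2 b
  apply hab
  rcases eq_or_eq_of_card_eq_two hX hxy za with rfl | rfl <;>
    rcases eq_or_eq_of_card_eq_two hX hxy zb with rfl | rfl <;> simp [hcxy]

lemma apply_eq_swap [Fintype P] [DecidableEq P] (hP : Fintype.card P = 2) {p q : P}
    (hpq : p ≠ q) (c : Classif X P) : c.1 y = swap p q (c.1 x) :=
  have : Nontrivial P := ⟨p, q, hpq⟩
  (swap_apply_eq_of_ne hP hpq (apply_ne hX hxy c)).symm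

end Classif

section ObjectWise

variable {n : ℕ} {X P : Type} {α : Profile n X P → Classif X P} {f : X → (Fin n → P) → P}

lemma independent_of_apply_eq (hα : ∀ c z, (α c).1 z = f z fun i => (c i).1 z) :
    Independent α := by
  intro z c c' hcc'
  rw [hα, hα]
  exact congrArg (f z) (funext hcc')

lemma unanimous_of_apply_eq (hα : ∀ c z, (α c).1 z = f z fun i => (c i).1 z)
    (hf : ∀ z a, f z (fun _ => a) = a) : Unanimous α := fun _ =>
  funext fun z => (hα _ z).trans (hf z _)

end ObjectWise

theorem pair_induces_unanimous_independent_caf_iff_general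
    {n : ℕ}
    (X P : Type) [Fintype X] [Fintype P] [DecidableEq X] [DecidableEq P]
    (hX : Fintype.card X = 2) (hP : Fintype.card P = 2)
    (x y : X) (hxy : x ≠ y) (p q : P) (hpq : p ≠ q)
    (αx αy : (Fin n → P) → P)
    (hx1 : αx (fun _ => p) = p) (hx2 : αx (fun _ => q) = q) :
    (∃ α : Profile n X P → Classif X P,
        (∀ c : Profile n X P, (α c).1 = fun z =>
          if z = x then αx (fun i => (c i).1 x) else αy (fun i => (c i).1 y)) ∧
        Unanimous α ∧ Independent α) ↔
      ∀ r : Fin n → P, αy r = Equiv.swap p q (αx (fun i => Equiv.swap p q (r i))) := by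
  have hswap := swap_apply_ne_self_of_card_eq_two hP hpq
  constructor
  · rintro ⟨α, hα, -, -⟩ r
    let c : Profile n X P := fun i => ⟨_, surjective_ite_of_card_eq_two hP hxy (hswap (r i))⟩
    simpa [hα, c, hxy.symm] using Classif.apply_eq_swap hX hxy hP hpq (α c)
  · intro hrel
    have hy : ∀ c : Profile n X P,
        αy (fun i => (c i).1 y) = swap p q (αx fun i => (c i).1 x) := by
      intro c
      simp only [hrel, Classif.apply_eq_swap hX hxy hP hpq, swap_apply_self]
    let α : Profile n X P → Classif X P := fun c =>
      ⟨_, surjective_ite_of_card_eq_two hP hxy (hy c ▸ (hswap _).symm)⟩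
    have hα : ∀ c z, (α c).1 z = (if z = x then αx else αy) fun i => (c i).1 z := by
      intro c z
      rcases eq_or_eq_of_card_eq_two hX hxy z with rfl | rfl <;> simp [α, hxy.symm]
    have hx : ∀ a, αx (fun _ => a) = a := fun a => by
      rcases eq_or_eq_of_card_eq_two hP hpq a with rfl | rfl <;> assumption
    have hf : ∀ z a, (if z = x then αx else αy) (fun _ => a) = a := by
      intro z a
      split_ifs
      · exact hx a
      · rw [hrel, hx, swap_apply_self]
    exact ⟨α, fun _ => rfl, unanimous_of_apply_eq hα hf, independent_of_apply_eq hα⟩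

/-- **Proposition 1 (iff form).** Let `X = {x, y}` and `P = {p, q}`, and let `αx` be a
unanimous elementary CAF. Then `αy` induces (together with `αx`) a unanimous and
independent CAF iff `αy r = ¬ (αx (¬ r))` for all `r`, where `¬` swaps `p` and `q`. -/
theorem pair_induces_unanimous_independent_caf_iff
    {n : ℕ} (hn : 2 ≤ n)
    (X P : Type) [Fintype X] [Fintype P] [DecidableEq X] [DecidableEq P]
    (hX : Fintype.card X = 2) (hP : Fintype.card P = 2)
    (x y : X) (hxy : x ≠ y) (p q : P) (hpq : p ≠ q)
    (αx αy : (Fin n → P) → P)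
    (hx1 : αx (fun _ => p) = p) (hx2 : αx (fun _ => q) = q) :
    (∃ α : Profile n X P → Classif X P,
        (∀ c : Profile n X P, (α c).1 = fun z =>
          if z = x then αx (fun i => (c i).1 x) else αy (fun i => (c i).1 y)) ∧
        Unanimous α ∧ Independent α) ↔
      ∀ r : Fin n → P, αy r = Equiv.swap p q (αx (fun i => Equiv.swap p q (r i))) :=
  pair_induces_unanimous_independent_caf_iff_general X P hX hP x y hxy p q hpq αx αy hx1 hx2
end

section
/- Let X = {x, y} and P = {p, q}, and let α_x : P^N → P be any unanimous elementary CAF. Then there is exactly one elementary CAF α_y : P^N → P such that for every profile c of classifications the map sending x to α_x((c_i(x))_i) and y to α_y((c_i(y))_i) is surjective onto P; namely α_y(r) = ¬α_x(¬r) for all r ∈ P^N, where ¬ swaps p and q. -/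
/-- **Proposition 1 (uniqueness form).** Let `X = {x, y}` and `P = {p, q}`, and let `αx`
be a unanimous elementary CAF. Then there is exactly one elementary CAF `αy` making the
induced map surjective on every profile, namely `αy r = ¬ (αx (¬ r))` where `¬` swaps
`p` and `q`. -/
theorem unique_companion_elementary_caf
    {n : ℕ} (hn : 2 ≤ n)
    (X P : Type) [Fintype X] [Fintype P] [DecidableEq X] [DecidableEq P]
    (hX : Fintype.card X = 2) (hP : Fintype.card P = 2)
    (x y : X) (hxy : x ≠ y) (p q : P) (hpq : p ≠ q)
    (αx : (Fin n → P) → P)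
    (hx1 : αx (fun _ => p) = p) (hx2 : αx (fun _ => q) = q) :
    ∀ αy : (Fin n → P) → P,
      (∀ c : Profile n X P, Function.Surjective fun z =>
        if z = x then αx (fun i => (c i).1 x) else αy (fun i => (c i).1 y)) ↔
      αy = fun r => Equiv.swap p q (αx (fun i => Equiv.swap p q (r i))) := by
  -- Every element of P is p or q
  have hPel : ∀ a : P, a = p ∨ a = q := by
    intro a
    have huniv : ({p, q} : Finset P) = Finset.univ := by
      apply Finset.eq_univ_of_card
      rw [Finset.card_insert_of_notMem (by simp [hpq]), Finset.card_singleton, hP]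
    have : a ∈ ({p, q} : Finset P) := huniv ▸ Finset.mem_univ a
    simpa using this
  have hXel : ∀ z : X, z = x ∨ z = y := by
    intro z
    have huniv : ({x, y} : Finset X) = Finset.univ := by
      apply Finset.eq_univ_of_card
      rw [Finset.card_insert_of_notMem (by simp [hxy]), Finset.card_singleton, hX]
    have : z ∈ ({x, y} : Finset X) := huniv ▸ Finset.mem_univ z
    simpa using this
  have hswap : ∀ a b : P, a ≠ b → b = Equiv.swap p q a := by
    intro a b h
    rcases hPel a with rfl | rfl <;> rcases hPel b with rfl | rfl <;>
      simp_all [Equiv.swap_apply_left, Equiv.swap_apply_right]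
  have hswapne : ∀ a : P, Equiv.swap p q a ≠ a := by
    intro a
    rcases hPel a with rfl | rfl <;>
      simp [Equiv.swap_apply_left, Equiv.swap_apply_right, hpq, hpq.symm]
  -- a function on X taking different values at x and y is surjective
  have hsurj2 : ∀ f : X → P, f x ≠ f y → Function.Surjective f := by
    intro f hne p'
    by_cases h : p' = f x
    · exact ⟨x, h.symm⟩
    · refine ⟨y, ?_⟩
      rw [hswap (f x) (f y) hne, ← hswap (f x) p' (fun hh => h hh.symm)]
  -- a surjective function takes different values at x and y
  have hne2 : ∀ f : X → P, Function.Surjective f → f x ≠ f y := by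
    intro f hf heq
    obtain ⟨z, hz⟩ := hf p
    obtain ⟨w, hw⟩ := hf q
    have hall : ∀ u : X, f u = f x := by
      intro u; rcases hXel u with rfl | rfl
      · rfl
      · exact heq.symm
    exact hpq ((hall z ▸ hz).symm.trans (hall w ▸ hw))
  have hclassif : ∀ c : Classif X P, c.1 y = Equiv.swap p q (c.1 x) :=
    fun c => hswap _ _ (hne2 c.1 c.2)
  intro αy
  constructor
  · intro h
    funext r
    -- build the profile with (c i) x = swap (r i), (c i) y = r i
    set c : Profile n X P := fun i =>
      ⟨fun z => if z = x then Equiv.swap p q (r i) else r i, by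
        apply hsurj2
        simp [hxy, Ne.symm hxy, hswapne]⟩ with hc
    have hs := h c
    have hne := hne2 _ hs
    simp only [if_pos rfl, if_neg (Ne.symm hxy)] at hne
    have := hswap _ _ hne
    simp only [hc, if_pos rfl, if_neg (Ne.symm hxy)] at this
    exact this
  · intro h c
    subst h
    apply hsurj2
    simp only [if_pos rfl, if_neg (Ne.symm hxy)]
    have : ∀ i, Equiv.swap p q ((c i).1 y) = (c i).1 x := by
      intro i; rw [hclassif (c i)]; simp
    simp only [this]
    exact fun heq => hswapne _ heq.symm
end

section
/- Let m > ρ ≥ 2 and let α be an independent classification aggregation function satisfying generalized unanimity with permutation π (i.e., α(c,...,c) = π ∘ c for all classifications c). Then for all distinct objects x, y ∈ X, all categories p, q ∈ P, and all vectors r, r' ∈ P^N with {r_i, r'_i} = {p, q} for every i ∈ N, and for any profiles c, c' ∈ 𝒞^N with c_i(x) = r_i and c'_i(y) = r'_i for all i ∈ N, one has {α(c)(x), α(c')(y)} = {π(p), π(q)}. -/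
/-- **Claim (1) of Lemma 2.** For an independent CAF satisfying generalized unanimity
with permutation `π`: if `{r i, r' i} = {p, q}` for every individual `i`, then for any
profiles `c`, `c'` with `c_i(x) = r i` and `c'_i(y) = r' i`, one has
`{α(c)(x), α(c')(y)} = {π p, π q}`. -/
theorem claim_one
    {n ρ m : ℕ} (hn : 2 ≤ n) (hρ : 2 ≤ ρ) (hm : ρ < m)
    (X P : Type) [Fintype X] [Fintype P]
    (hX : Fintype.card X = m) (hP : Fintype.card P = ρ)
    (α : Profile n X P → Classif X P) (hInd : Independent α)
    (π : Equiv.Perm P) (hGU : ∀ c : Classif X P, (α (fun _ => c)).1 = π ∘ c.1)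
    (x y : X) (hxy : x ≠ y) (p q : P) (r r' : Fin n → P)
    (hrr' : ∀ i, ({r i, r' i} : Set P) = {p, q})
    (c c' : Profile n X P)
    (hc : ∀ i, (c i).1 x = r i) (hc' : ∀ i, (c' i).1 y = r' i) :
    ({(α c).1 x, (α c').1 y} : Set P) = {π p, π q} := by
  classical
  have hPn : Nonempty P := Fintype.card_pos_iff.mp (by omega)
  have hXn : Nonempty X := Fintype.card_pos_iff.mp (by omega)
  -- there is a classification with any prescribed value at any point
  have hclass : ∀ (z : X) (w : P), ∃ e : Classif X P, e.1 z = w := by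
    intro z w
    obtain ⟨f⟩ : Nonempty (P ↪ X) := Function.Embedding.nonempty_of_card_le (by omega)
    have hs : Function.Surjective (Function.invFun f) :=
      Function.invFun_surjective f.injective
    refine ⟨⟨Equiv.swap (Function.invFun f z) w ∘ Function.invFun f,
      (Equiv.swap _ _).surjective.comp hs⟩, ?_⟩
    simp
  -- consequences of hrr'
  have hr_mem : ∀ i, r i = p ∨ r i = q := by
    intro i
    have : r i ∈ ({r i, r' i} : Set P) := Set.mem_insert _ _
    rw [hrr' i] at this; exact this
  have hr'_mem : ∀ i, r' i = p ∨ r' i = q := by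
    intro i
    have : r' i ∈ ({r i, r' i} : Set P) := Set.mem_insert_of_mem _ rfl
    rw [hrr' i] at this; exact this
  have hpq_mem : ∀ i, ∀ u ∈ ({p, q} : Set P), u = r i ∨ u = r' i := by
    intro i u hu
    rw [← hrr' i] at hu; exact hu
  by_cases hpq : p = q
  · -- degenerate case p = q : all r i = r' i = p
    subst hpq
    have hr : ∀ i, r i = p := fun i => (hr_mem i).elim id id
    have hr' : ∀ i, r' i = p := fun i => (hr'_mem i).elim id id
    obtain ⟨e, he⟩ := hclass x p
    obtain ⟨e', he'⟩ := hclass y p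
    have h1 : (α c).1 x = π p := by
      have := hInd x c (fun _ => e) (fun i => by rw [hc i, hr i, he])
      rw [this, hGU e]; simp [he]
    have h2 : (α c').1 y = π p := by
      have := hInd y c' (fun _ => e') (fun i => by rw [hc' i, hr' i, he'])
      rw [this, hGU e']; simp [he']
    rw [h1, h2]
  · -- main case p ≠ q
    have key : ∀ u ∈ ({p, q} : Set P), π u ∈ ({(α c).1 x, (α c').1 y} : Set P) := by
      intro u hu
      -- build common "off part" g avoiding u outside {x,y} and covering P \ {u} there
      have hQne : Nonempty {w : P // w ≠ u} := by
        rcases hu with hu | hu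
        · subst hu; exact ⟨⟨q, fun h => hpq h.symm⟩⟩
        · have hu' := Set.mem_singleton_iff.mp hu
          subst hu'; exact ⟨⟨p, hpq⟩⟩
      have hcardQ : Fintype.card {w : P // w ≠ u} = ρ - 1 := by
        have := Fintype.card_subtype_compl (fun w : P => w = u)
        simpa [Fintype.card_subtype_eq, hP] using this
      have hcardY : ρ - 1 ≤ Fintype.card {z : X // z ≠ x ∧ z ≠ y} := by
        have hcongr : Fintype.card {z : X // z ≠ x ∧ z ≠ y}
            = Fintype.card {z : X // ¬(z = x ∨ z = y)} :=
          Fintype.card_congr (Equiv.subtypeEquivRight (by tauto))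
        have hle2 : Fintype.card {z : X // z = x ∨ z = y} ≤ 2 := by
          have hinj : Function.Injective
              (fun z : {z : X // z = x ∨ z = y} => decide (z.1 = x)) := by
            rintro ⟨a, ha⟩ ⟨b, hb⟩ hab
            simp only [decide_eq_decide] at hab
            refine Subtype.ext (show a = b from ?_)
            rcases ha with ha | ha <;> rcases hb with hb | hb
            · exact ha.trans hb.symm
            · subst ha; subst hb; exact absurd (hab.mp rfl).symm hxy
            · subst ha; subst hb; exact absurd (hab.mpr rfl).symm hxy
            · exact ha.trans hb.symm
          have := Fintype.card_le_of_injective _ hinj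
          simpa using this
        have := Fintype.card_subtype_compl (fun z : X => z = x ∨ z = y)
        rw [hcongr, this, hX]
        omega
      obtain ⟨f⟩ : Nonempty ({w : P // w ≠ u} ↪ {z : X // z ≠ x ∧ z ≠ y}) :=
        Function.Embedding.nonempty_of_card_le (by omega)
      have hfs : Function.Surjective (Function.invFun f) :=
        Function.invFun_surjective f.injective
      set g : X → P :=
        fun z => if h : z ≠ x ∧ z ≠ y then (Function.invFun f ⟨z, h⟩).1 else p with hg
      have hgne : ∀ z, z ≠ x → z ≠ y → g z ≠ u := by
        intro z h1 h2
        rw [hg]; simp only [dif_pos (And.intro h1 h2)]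
        exact (Function.invFun f ⟨z, ⟨h1, h2⟩⟩).2
      have hgcover : ∀ w : P, w ≠ u → ∃ z : X, z ≠ x ∧ z ≠ y ∧ g z = w := by
        intro w hw
        obtain ⟨z0, hz0⟩ := hfs ⟨w, hw⟩
        refine ⟨z0.1, z0.2.1, z0.2.2, ?_⟩
        rw [hg]; simp only [dif_pos z0.2]
        rw [Subtype.coe_eta, hz0]
      -- the profile d
      have hdsurj : ∀ i : Fin n, Function.Surjective
          (fun z : X => if z = x then r i else if z = y then r' i else g z) := by
        intro i w
        by_cases hw : w = u
        · rcases hpq_mem i u hu with h | h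
          · exact ⟨x, by simpa using h.symm.trans hw.symm⟩
          · exact ⟨y, by simpa [Ne.symm hxy] using h.symm.trans hw.symm⟩
        · obtain ⟨z, hz1, hz2, hz3⟩ := hgcover w hw
          exact ⟨z, by simpa [hz1, hz2] using hz3⟩
      set d : Profile n X P := fun i =>
        ⟨fun z => if z = x then r i else if z = y then r' i else g z, hdsurj i⟩ with hd
      have hdx : (α d).1 x = (α c).1 x := by
        apply hInd; intro i; simp [hd, hc i]
      have hdy : (α d).1 y = (α c').1 y := by
        apply hInd; intro i; simp [hd, if_neg (Ne.symm hxy), hc' i]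
      -- off {x,y}, the aggregate of d avoids π u
      have hoff : ∀ z, z ≠ x → z ≠ y → (α d).1 z ≠ π u := by
        intro z h1 h2
        obtain ⟨e, he⟩ := hclass z (g z)
        have hz : (α d).1 z = π (g z) := by
          have := hInd z d (fun _ => e) (fun i => by simp [hd, if_neg h1, if_neg h2, he])
          rw [this, hGU e]; simp [he]
        rw [hz]
        exact fun h => hgne z h1 h2 (π.injective h)
      -- surjectivity of α d forces π u to appear at x or y
      obtain ⟨z, hz⟩ := (α d).2 (π u)
      by_cases hzx : z = x
      · have hx' : (α c).1 x = π u := by rw [← hdx, ← hzx]; exact hz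
        exact Set.mem_insert_iff.mpr (Or.inl hx'.symm)
      · by_cases hzy : z = y
        · have hy' : (α c').1 y = π u := by rw [← hdy, ← hzy]; exact hz
          exact Set.mem_insert_iff.mpr (Or.inr (Set.mem_singleton_iff.mpr hy'.symm))
        · exact absurd hz (hoff z hzx hzy)
    have hp' := key p (Set.mem_insert _ _)
    have hq' := key q (Set.mem_insert_of_mem _ rfl)
    have hne : π p ≠ π q := fun h => hpq (π.injective h)
    rcases hp' with h1 | h1 <;> rcases hq' with h2 | h2
    · exact absurd (h1.trans h2.symm) hne
    · rw [← h1, ← Set.mem_singleton_iff.mp h2]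
    · rw [← Set.mem_singleton_iff.mp h1, ← h2, Set.pair_comm]
    · exact absurd ((Set.mem_singleton_iff.mp h1).trans
        (Set.mem_singleton_iff.mp h2).symm) hne
end
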